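/- Let $\bar u_\theta>0$ be smooth on $[0,L]\times[0,\infty)$, $q$ smooth with $q(x,0)=q_y(x,0)=0$ and decay as $y\to\infty$, $w=(1+y)^{\mathfrak l}$, and suppose $\bar u_\theta$ and $\partial_y\bar u_\theta$, $\partial_y^2\bar u_\theta$ are bounded. Then integrating by parts yields the coercivity identity-inequality: $-\int_0^{x_0}\!\!\int_0^\infty \partial_y^3(\bar u_\theta q)\,q_y\,w^2\,dy\,dx \ge \|\sqrt{\bar u_\theta}\,q_{yy}\,w\|_{L^2}^2 - C\big(\|(\partial_y\bar u_\theta,\partial_y^2\bar u_\theta)\|_{L^\infty}+1\big)\big(\|q_y\,w\|_{L^2}^2 + \|q_y\,w\|_{L^2}\,\|\sqrt{\bar u_\theta}q_{yy}\,w\|_{L^2} + \|\partial_y^2\bar u_\theta\,q\,w\|_{L^2}\,\|(q_{yy},q_y)w\|_{L^2}\big)$, where all norms are over $[0,x_0]\times\mathbb{R}_+$, with $C$ universal. -/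

import Mathlib

open Set Filter MeasureTheory


lemma pd_exists {F : ℝ × ℝ → ℝ} (hF : ContDiff ℝ (⊤ : ℕ∞) F) :
    ∃ G : ℝ × ℝ → ℝ, ContDiff ℝ (⊤ : ℕ∞) G ∧ ∀ x y : ℝ, HasDerivAt (fun y => F (x, y)) (G (x, y)) y := by
  refine ⟨fun p => fderiv ℝ F p ((0:ℝ), (1:ℝ)), ?_, ?_⟩
  · exact (ContinuousLinearMap.apply ℝ ℝ ((0:ℝ),(1:ℝ))).contDiff.comp (hF.fderiv_right (by simp))
  · intro x y
    have h1 : HasDerivAt (fun y : ℝ => ((x, y) : ℝ × ℝ)) ((0:ℝ), (1:ℝ)) y :=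
      (hasDerivAt_const y x).prodMk (hasDerivAt_id y)
    exact ((hF.differentiable (by simp) (x, y)).hasFDerivAt.comp_hasDerivAt y h1)

lemma cs_int {α : Type*} [MeasurableSpace α] {μ : Measure α} {f g : α → ℝ}
    (hf2 : Integrable (fun x => f x ^ 2) μ) (hg2 : Integrable (fun x => g x ^ 2) μ)
    (hfg : Integrable (fun x => f x * g x) μ) :
    ∫ x, f x * g x ∂μ ≤ Real.sqrt (∫ x, f x ^ 2 ∂μ) * Real.sqrt (∫ x, g x ^ 2 ∂μ) := by
  set A := ∫ x, f x ^ 2 ∂μ with hA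
  set B := ∫ x, g x ^ 2 ∂μ with hB
  have hA0 : 0 ≤ A := integral_nonneg fun x => sq_nonneg _
  have hB0 : 0 ≤ B := integral_nonneg fun x => sq_nonneg _
  rcases eq_or_lt_of_le hA0 with hA' | hA'
  · have : (fun x => f x ^ 2) =ᵐ[μ] 0 :=
      (integral_eq_zero_iff_of_nonneg (fun x => sq_nonneg _) hf2).1 hA'.symm
    have hz : (fun x => f x * g x) =ᵐ[μ] 0 := by
      filter_upwards [this] with x hx
      have : f x = 0 := by
        have := hx; simp only [Pi.zero_apply] at this
        nlinarith [sq_nonneg (f x)]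
      simp [this]
    rw [integral_congr_ae hz]
    simp
    positivity
  rcases eq_or_lt_of_le hB0 with hB' | hB'
  · have : (fun x => g x ^ 2) =ᵐ[μ] 0 :=
      (integral_eq_zero_iff_of_nonneg (fun x => sq_nonneg _) hg2).1 hB'.symm
    have hz : (fun x => f x * g x) =ᵐ[μ] 0 := by
      filter_upwards [this] with x hx
      have : g x = 0 := by
        have := hx; simp only [Pi.zero_apply] at this
        nlinarith [sq_nonneg (g x)]
      simp [this]
    rw [integral_congr_ae hz]
    simp
    positivity
  · set t := Real.sqrt B / Real.sqrt A with ht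
    have hsA : 0 < Real.sqrt A := Real.sqrt_pos.2 hA'
    have hsB : 0 < Real.sqrt B := Real.sqrt_pos.2 hB'
    have ht0 : 0 < t := div_pos hsB hsA
    have hpt : ∀ x, f x * g x ≤ (t * f x ^ 2 + g x ^ 2 / t) / 2 := by
      intro x
      rw [le_div_iff₀ (by norm_num : (0:ℝ) < 2)]
      have h1 : g x ^ 2 / t = g x ^ 2 * t⁻¹ := by ring
      have h2 : (t⁻¹) * t = 1 := inv_mul_cancel₀ ht0.ne'
      nlinarith [mul_nonneg (inv_nonneg.2 ht0.le) (sq_nonneg (t * f x - g x))]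
    have hint : Integrable (fun x => (t * f x ^ 2 + g x ^ 2 / t) / 2) μ :=
      (((hf2.const_mul t).add (hg2.div_const t)).div_const 2)
    have := integral_mono hfg hint hpt
    have hcalc : ∫ x, (t * f x ^ 2 + g x ^ 2 / t) / 2 ∂μ = (t * A + B / t) / 2 := by
      rw [integral_div, integral_add (hf2.const_mul t) (hg2.div_const t),
        integral_const_mul, integral_div]
    rw [hcalc] at this
    refine this.trans (le_of_eq ?_)
    have hAeq : Real.sqrt A ^ 2 = A := Real.sq_sqrt hA0
    have hBeq : Real.sqrt B ^ 2 = B := Real.sq_sqrt hB0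
    field_simp [ht]
    have htA : t * Real.sqrt A = Real.sqrt B := by rw [ht]; field_simp
    linear_combination (t * Real.sqrt A - Real.sqrt B) * htA - t^2 * hAeq - hBeq

open scoped ContDiff
set_option maxHeartbeats 1600000

lemma slice_ibp (𝔩 : ℝ) (h𝔩 : 1 ≤ 𝔩) (K : ℝ) (hK0 : 0 ≤ K)
    (a b : ℝ → ℝ) (ha : ContDiff ℝ (⊤ : ℕ∞) a) (hb : ContDiff ℝ (⊤ : ℕ∞) b)
    (hapos : ∀ y, 0 < a y)
    (haK : ∀ y, |a y| ≤ K ∧ |deriv a y| ≤ K ∧ |iteratedDeriv 2 a y| ≤ K)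
    (hb'0 : deriv b 0 = 0)
    (tb : Tendsto (fun y => b y * (1+y) ^ (2*𝔩)) atTop (nhds 0))
    (tb1 : Tendsto (fun y => deriv b y * (1+y) ^ (2*𝔩)) atTop (nhds 0))
    (tb2 : Tendsto (fun y => iteratedDeriv 2 b y * (1+y) ^ (2*𝔩)) atTop (nhds 0))
    (I3 : IntegrableOn (fun y => iteratedDeriv 3 (fun t => a t * b t) y * deriv b y * (1+y) ^ (2*𝔩)) (Ioi 0))
    (Iu : IntegrableOn (fun y => a y * (iteratedDeriv 2 b y) ^ 2 * (1+y) ^ (2*𝔩)) (Ioi 0))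
    (I1 : IntegrableOn (fun y => (deriv b y) ^ 2 * (1+y) ^ (2*𝔩)) (Ioi 0))
    (I2 : IntegrableOn (fun y => (iteratedDeriv 2 b y) ^ 2 * (1+y) ^ (2*𝔩)) (Ioi 0))
    (I4 : IntegrableOn (fun y => (iteratedDeriv 2 a y * b y) ^ 2 * (1+y) ^ (2*𝔩)) (Ioi 0)) :
    ∫ y in Ioi (0:ℝ),
      (a y * (iteratedDeriv 2 b y) ^ 2 * (1+y) ^ (2*𝔩)
      + 2*𝔩 * (a y * iteratedDeriv 2 b y * deriv b y) * (1+y) ^ (2*𝔩-1)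
      - iteratedDeriv 2 a y * (deriv b y) ^ 2 * (1+y) ^ (2*𝔩)
      + 2*𝔩 * (deriv a y * (deriv b y) ^ 2) * (1+y) ^ (2*𝔩-1)
      + iteratedDeriv 2 a y * b y * iteratedDeriv 2 b y * (1+y) ^ (2*𝔩)
      + 2*𝔩 * (iteratedDeriv 2 a y * b y * deriv b y) * (1+y) ^ (2*𝔩-1))
      = -∫ y in Ioi (0:ℝ), iteratedDeriv 3 (fun t => a t * b t) y * deriv b y * (1+y) ^ (2*𝔩) := by
  have h𝔩0 : (0:ℝ) ≤ 𝔩 := by linarith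
  set a1 := deriv a with ha1def
  set a2 := iteratedDeriv 2 a with ha2def
  set b1 := deriv b with hb1def
  set b2 := iteratedDeriv 2 b with hb2def
  set g := iteratedDeriv 2 (fun t => a t * b t) with hgdef
  set g3 := iteratedDeriv 3 (fun t => a t * b t) with hg3def
  set W : ℝ → ℝ := fun y => (1+y) ^ (2*𝔩) with hWdef
  set V : ℝ → ℝ := fun y => (1+y) ^ (2*𝔩-1) with hVdef
  -- smoothness
  have haS : ContDiff ℝ ∞ a := ha.of_le (by simp)
  have hbS : ContDiff ℝ ∞ b := hb.of_le (by simp)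
  have hab : ContDiff ℝ ∞ (fun t => a t * b t) := haS.mul hbS
  have ha1s : ContDiff ℝ ∞ a1 := by simpa using haS.iterate_deriv 1
  have ha2s : ContDiff ℝ ∞ a2 := by
    rw [ha2def, iteratedDeriv_eq_iterate]; exact haS.iterate_deriv 2
  have hb1s : ContDiff ℝ ∞ b1 := by simpa using hbS.iterate_deriv 1
  have hb2s : ContDiff ℝ ∞ b2 := by
    rw [hb2def, iteratedDeriv_eq_iterate]; exact hbS.iterate_deriv 2
  have hgs : ContDiff ℝ ∞ g := by
    rw [hgdef, iteratedDeriv_eq_iterate]; exact hab.iterate_deriv 2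
  have hg3s : ContDiff ℝ ∞ g3 := by
    rw [hg3def, iteratedDeriv_eq_iterate]; exact hab.iterate_deriv 3
  -- derivative facts
  have hda : ∀ y, HasDerivAt a (a1 y) y := fun y => (haS.differentiable (by simp) y).hasDerivAt
  have hdb : ∀ y, HasDerivAt b (b1 y) y := fun y => (hbS.differentiable (by simp) y).hasDerivAt
  have hda1 : ∀ y, HasDerivAt a1 (a2 y) y := by
    intro y
    have h := (ha1s.differentiable (by simp) y).hasDerivAt
    have : deriv a1 y = a2 y := by
      rw [ha2def, ha1def, iteratedDeriv_succ, iteratedDeriv_one]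
    rwa [this] at h
  have hdb1 : ∀ y, HasDerivAt b1 (b2 y) y := by
    intro y
    have h := (hb1s.differentiable (by simp) y).hasDerivAt
    have : deriv b1 y = b2 y := by
      rw [hb2def, hb1def, iteratedDeriv_succ, iteratedDeriv_one]
    rwa [this] at h
  have hdg : ∀ y, HasDerivAt g (g3 y) y := by
    intro y
    have h := (hgs.differentiable (by simp) y).hasDerivAt
    have : deriv g y = g3 y := by
      rw [hg3def, hgdef]
      exact congrFun (iteratedDeriv_succ (n := 2)).symm y
    rwa [this] at h
  -- product rule
  have h1 : deriv (fun t => a t * b t) = fun t => a1 t * b t + a t * b1 t :=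
    funext fun t => deriv_mul (haS.differentiable (by simp) t) (hbS.differentiable (by simp) t)
  have hgy : ∀ y, g y = a2 y * b y + 2*(a1 y * b1 y) + a y * b2 y := by
    intro y
    have h2 : HasDerivAt (fun t => a1 t * b t + a t * b1 t)
        (a2 y * b y + a1 y * b1 y + (a1 y * b1 y + a y * b2 y)) y :=
      ((hda1 y).mul (hdb y)).add ((hda y).mul (hdb1 y))
    have h3 : g y = deriv (fun t => a1 t * b t + a t * b1 t) y := by
      rw [hgdef, iteratedDeriv_succ, iteratedDeriv_one, h1]
    rw [h3, h2.deriv]; ring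
  -- weight facts
  have hW : ∀ y ∈ Ioi (0:ℝ), HasDerivAt W (2*𝔩 * V y) y := by
    intro y hy
    have h1y : (0:ℝ) < 1 + y := by have := mem_Ioi.1 hy; linarith
    have h := (Real.hasDerivAt_rpow_const (x := 1 + y) (p := 2*𝔩)
        (Or.inl h1y.ne')).comp y ((hasDerivAt_id y).const_add 1)
    simpa [hWdef, hVdef, mul_comm, Function.comp_def] using h
  -- pointwise weight facts
  have hWpos : ∀ y : ℝ, 0 ≤ y → 1 ≤ W y := fun y hy =>
    Real.one_le_rpow (by linarith) (by positivity)
  have hW0 : ∀ y : ℝ, 0 ≤ y → 0 ≤ W y := fun y hy => le_trans zero_le_one (hWpos y hy)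
  have hV0 : ∀ y : ℝ, 0 ≤ y → 0 ≤ V y := fun y _ => Real.rpow_nonneg (by linarith) _
  have hVW : ∀ y : ℝ, 0 ≤ y → V y ≤ W y := fun y hy =>
    Real.rpow_le_rpow_of_exponent_le (by linarith) (by linarith)
  -- continuity of W, V
  have hWc : ∀ y : ℝ, 0 ≤ y → ContinuousAt W y := by
    intro y hy
    have h1 : ContinuousAt (fun y : ℝ => 1 + y) y := by fun_prop
    have h2 := (Real.continuousAt_rpow_const (1+y) (2*𝔩)
      (Or.inl (by positivity))).comp h1
    simpa [Function.comp_def, hWdef] using h2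
  have hVc : ∀ y : ℝ, 0 ≤ y → ContinuousAt V y := by
    intro y hy
    have h1 : ContinuousAt (fun y : ℝ => 1 + y) y := by fun_prop
    have h2 := (Real.continuousAt_rpow_const (1+y) (2*𝔩-1)
      (Or.inl (by positivity))).comp h1
    simpa [Function.comp_def, hVdef] using h2
  have hcW : ContinuousOn W (Ioi 0) := fun y hy => ((hWc y (le_of_lt hy)).continuousWithinAt)
  have hcV : ContinuousOn V (Ioi 0) := fun y hy => ((hVc y (le_of_lt hy)).continuousWithinAt)
  -- tendsto facts
  have z1 : Tendsto (fun y => |b y * W y|) atTop (nhds 0) := by simpa using tb.abs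
  have z2 : Tendsto (fun y => |b1 y * W y|) atTop (nhds 0) := by simpa using tb1.abs
  have z3 : Tendsto (fun y => |b2 y * W y|) atTop (nhds 0) := by simpa using tb2.abs
  have hb1z : Tendsto b1 atTop (nhds 0) := by
    apply squeeze_zero_norm' ?_ z2
    filter_upwards [eventually_ge_atTop (0:ℝ)] with y hy
    rw [Real.norm_eq_abs, abs_mul, abs_of_nonneg (hW0 y hy)]
    nlinarith [abs_nonneg (b1 y), hWpos y hy]
  have z4 : Tendsto (fun y => |b1 y|) atTop (nhds 0) := by simpa using hb1z.abs
  -- |g| bound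
  have hgabs : ∀ y : ℝ, |g y| ≤ K*|b y| + 2*K*|b1 y| + K*|b2 y| := by
    intro y
    rw [hgy y]
    have t1 := abs_add_three (a2 y * b y) (2*(a1 y * b1 y)) (a y * b2 y)
    have e1 := (haK y).1; have e2 := (haK y).2.1; have e3 := (haK y).2.2
    have t2 : |a2 y * b y| ≤ K * |b y| := by
      rw [abs_mul]; exact mul_le_mul_of_nonneg_right e3 (abs_nonneg _)
    have t3 : |2*(a1 y * b1 y)| ≤ 2*K*|b1 y| := by
      rw [abs_mul, abs_mul, abs_two]
      nlinarith [abs_nonneg (b1 y), abs_nonneg (a1 y), abs_nonneg (a1 y * b1 y)]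
    have t4 : |a y * b2 y| ≤ K * |b2 y| := by
      rw [abs_mul]; exact mul_le_mul_of_nonneg_right e1 (abs_nonneg _)
    linarith
  -- majorant
  have hFF : IntegrableOn (fun y => a y * b2 y^2 * W y +
      (b1 y^2 * W y + (b2 y^2 * W y + (a2 y * b y)^2 * W y))) (Ioi 0) :=
    Iu.add (I1.add (I2.add I4))
  have dom : ∀ (f : ℝ → ℝ) (c : ℝ), ContinuousOn f (Ioi 0) →
      (∀ y ∈ Ioi (0:ℝ), |f y| ≤ c * (a y * b2 y^2 * W y +
        (b1 y^2 * W y + (b2 y^2 * W y + (a2 y * b y)^2 * W y)))) →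
      IntegrableOn f (Ioi 0) := by
    intro f c hc hbd
    exact ((hFF.const_mul c).mono' (hc.aestronglyMeasurable measurableSet_Ioi)
      ((ae_restrict_iff' measurableSet_Ioi).2 (ae_of_all _ hbd)))
  -- abs facts holder
  have absfact : ∀ y ∈ Ioi (0:ℝ),
      |g y| ≤ |a2 y * b y| + 2*K*|b1 y| + a y * |b2 y| := by
    intro y hy
    rw [hgy y]
    have t1 := abs_add_three (a2 y * b y) (2*(a1 y * b1 y)) (a y * b2 y)
    have e2 := (haK y).2.1
    have t3 : |2*(a1 y * b1 y)| ≤ 2*K*|b1 y| := by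
      rw [abs_mul, abs_mul, abs_two]
      nlinarith [abs_nonneg (b1 y), abs_nonneg (a1 y), abs_nonneg (a1 y * b1 y)]
    have t4 : |a y * b2 y| = a y * |b2 y| := by
      rw [abs_mul, abs_of_pos (hapos y)]
    linarith
  -- continuity shorthands
  have cg := hgs.continuous.continuousOn (s := Ioi (0:ℝ))
  have ca := haS.continuous.continuousOn (s := Ioi (0:ℝ))
  have ca1 := ha1s.continuous.continuousOn (s := Ioi (0:ℝ))
  have ca2 := ha2s.continuous.continuousOn (s := Ioi (0:ℝ))
  have cb := hbS.continuous.continuousOn (s := Ioi (0:ℝ))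
  have cb1 := hb1s.continuous.continuousOn (s := Ioi (0:ℝ))
  have cb2 := hb2s.continuous.continuousOn (s := Ioi (0:ℝ))
  -- integrability of the pieces
  have iP2 : IntegrableOn (fun y => 2*𝔩*(a y * b2 y * b1 y) * V y) (Ioi 0) := by
    apply dom (fun y => 2*𝔩*(a y * b2 y * b1 y) * V y) (𝔩*K) (((continuousOn_const.mul ((ca.mul cb2).mul cb1))).mul hcV)
    intro y hy
    have hy0 : (0:ℝ) ≤ y := le_of_lt hy
    have e1 := (haK y).1
    have hA : a y ≤ K := (abs_le.1 e1).2
    have hAp := hapos y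
    have hW0' := hW0 y hy0; have hV0' := hV0 y hy0; have hVW' := hVW y hy0
    have habs : |2*𝔩*(a y * b2 y * b1 y) * V y| = 2*𝔩*(a y * |b2 y| * |b1 y|) * V y := by
      simp only [abs_mul, abs_two, abs_of_nonneg h𝔩0, abs_of_nonneg hV0', abs_of_pos hAp]
    rw [habs, ← sq_abs (b1 y), ← sq_abs (b2 y), ← sq_abs (a2 y * b y)]
    calc 2*𝔩*(a y * |b2 y| * |b1 y|) * V y
        ≤ 2*𝔩*(a y * |b2 y| * |b1 y|) * W y :=
          mul_le_mul_of_nonneg_left hVW' (by positivity)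
      _ ≤ 𝔩*K*(|b1 y|^2 + |b2 y|^2) * W y := by
          nlinarith [mul_nonneg (mul_nonneg (mul_nonneg h𝔩0 (sub_nonneg.2 hA))
              (mul_nonneg (abs_nonneg (b2 y)) (abs_nonneg (b1 y)))) hW0',
            mul_nonneg (mul_nonneg (mul_nonneg h𝔩0 hK0) (sq_nonneg (|b1 y| - |b2 y|))) hW0']
      _ ≤ 𝔩*K * (a y * |b2 y|^2 * W y + (|b1 y|^2 * W y + (|b2 y|^2 * W y + |a2 y * b y|^2 * W y))) := by
          nlinarith [mul_nonneg (mul_nonneg h𝔩0 hK0)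
              (mul_nonneg (mul_nonneg hAp.le (sq_nonneg (|b2 y|))) hW0'),
            mul_nonneg (mul_nonneg h𝔩0 hK0) (mul_nonneg (sq_nonneg (|a2 y * b y|)) hW0')]
  have iP5 : IntegrableOn (fun y => a2 y * b y * b2 y * W y) (Ioi 0) := by
    apply dom (fun y => a2 y * b y * b2 y * W y) 1 (((ca2.mul cb).mul cb2).mul hcW)
    intro y hy
    have hy0 : (0:ℝ) ≤ y := le_of_lt hy
    have hAp := hapos y
    have hW0' := hW0 y hy0
    have habs : |a2 y * b y * b2 y * W y| = |a2 y * b y| * |b2 y| * W y := by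
      simp only [abs_mul, abs_of_nonneg hW0']
    rw [habs, ← sq_abs (b1 y), ← sq_abs (b2 y), ← sq_abs (a2 y * b y)]
    nlinarith [mul_nonneg (sq_nonneg (|a2 y * b y| - |b2 y|)) hW0',
      mul_nonneg (mul_nonneg hAp.le (sq_nonneg (|b2 y|))) hW0',
      mul_nonneg (sq_nonneg (|b1 y|)) hW0']
  have iP6 : IntegrableOn (fun y => 2*𝔩*(a2 y * b y * b1 y) * V y) (Ioi 0) := by
    apply dom (fun y => 2*𝔩*(a2 y * b y * b1 y) * V y) 𝔩 ((continuousOn_const.mul ((ca2.mul cb).mul cb1)).mul hcV)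
    intro y hy
    have hy0 : (0:ℝ) ≤ y := le_of_lt hy
    have hAp := hapos y
    have hW0' := hW0 y hy0; have hV0' := hV0 y hy0; have hVW' := hVW y hy0
    have habs : |2*𝔩*(a2 y * b y * b1 y) * V y| = 2*𝔩*(|a2 y * b y| * |b1 y|) * V y := by
      simp only [abs_mul, abs_two, abs_of_nonneg h𝔩0, abs_of_nonneg hV0']
    rw [habs, ← sq_abs (b1 y), ← sq_abs (b2 y), ← sq_abs (a2 y * b y)]
    calc 2*𝔩*(|a2 y * b y| * |b1 y|) * V y
        ≤ 2*𝔩*(|a2 y * b y| * |b1 y|) * W y := mul_le_mul_of_nonneg_left hVW' (by positivity)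
      _ ≤ 𝔩 * (a y * |b2 y|^2 * W y + (|b1 y|^2 * W y + (|b2 y|^2 * W y + |a2 y * b y|^2 * W y))) := by
          nlinarith [mul_nonneg (mul_nonneg h𝔩0 (sq_nonneg (|a2 y * b y| - |b1 y|))) hW0',
            mul_nonneg (mul_nonneg h𝔩0 (mul_nonneg hAp.le (sq_nonneg (|b2 y|)))) hW0',
            mul_nonneg (mul_nonneg h𝔩0 (sq_nonneg (|b2 y|))) hW0']
  have iJ3 : IntegrableOn (fun y => a2 y * b1 y^2 * W y) (Ioi 0) := by
    apply dom (fun y => a2 y * b1 y^2 * W y) K ((ca2.mul (cb1.pow 2)).mul hcW)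
    intro y hy
    have hy0 : (0:ℝ) ≤ y := le_of_lt hy
    have hAp := hapos y
    have hW0' := hW0 y hy0
    have e3 := (haK y).2.2
    have habs : |a2 y * b1 y^2 * W y| = |a2 y| * b1 y^2 * W y := by
      simp only [abs_mul, abs_of_nonneg hW0', abs_pow, sq_abs]
    rw [habs, ← sq_abs (b1 y), ← sq_abs (b2 y), ← sq_abs (a2 y * b y)]
    nlinarith [mul_nonneg (mul_nonneg (sub_nonneg.2 e3) (sq_nonneg (|b1 y|))) hW0',
      mul_nonneg hK0 (mul_nonneg (mul_nonneg hAp.le (sq_nonneg (|b2 y|))) hW0'),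
      mul_nonneg hK0 (mul_nonneg (sq_nonneg (|b2 y|)) hW0'),
      mul_nonneg hK0 (mul_nonneg (sq_nonneg (|a2 y * b y|)) hW0')]
  have iJ7 : IntegrableOn (fun y => 2*(a1 y * b1 y * b2 y) * W y) (Ioi 0) := by
    apply dom (fun y => 2*(a1 y * b1 y * b2 y) * W y) K ((continuousOn_const.mul ((ca1.mul cb1).mul cb2)).mul hcW)
    intro y hy
    have hy0 : (0:ℝ) ≤ y := le_of_lt hy
    have hAp := hapos y
    have hW0' := hW0 y hy0
    have e2 := (haK y).2.1
    have habs : |2*(a1 y * b1 y * b2 y) * W y| = 2*(|a1 y| * |b1 y| * |b2 y|) * W y := by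
      simp only [abs_mul, abs_two, abs_of_nonneg hW0']
    rw [habs, ← sq_abs (b1 y), ← sq_abs (b2 y), ← sq_abs (a2 y * b y)]
    nlinarith [mul_nonneg (mul_nonneg (sub_nonneg.2 e2)
        (mul_nonneg (abs_nonneg (b1 y)) (abs_nonneg (b2 y)))) hW0',
      mul_nonneg (mul_nonneg hK0 (sq_nonneg (|b1 y| - |b2 y|))) hW0',
      mul_nonneg hK0 (mul_nonneg (mul_nonneg hAp.le (sq_nonneg (|b2 y|))) hW0'),
      mul_nonneg hK0 (mul_nonneg (sq_nonneg (|a2 y * b y|)) hW0'),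
      abs_nonneg (a1 y)]
  have iJ4 : IntegrableOn (fun y => 2*𝔩*(a1 y * b1 y^2) * V y) (Ioi 0) := by
    apply dom (fun y => 2*𝔩*(a1 y * b1 y^2) * V y) (2*𝔩*K) ((continuousOn_const.mul (ca1.mul (cb1.pow 2))).mul hcV)
    intro y hy
    have hy0 : (0:ℝ) ≤ y := le_of_lt hy
    have hAp := hapos y
    have hW0' := hW0 y hy0; have hV0' := hV0 y hy0; have hVW' := hVW y hy0
    have e2 := (haK y).2.1
    have habs : |2*𝔩*(a1 y * b1 y^2) * V y| = 2*𝔩*(|a1 y| * b1 y^2) * V y := by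
      simp only [abs_mul, abs_two, abs_of_nonneg h𝔩0, abs_of_nonneg hV0', abs_pow, sq_abs]
    rw [habs, ← sq_abs (b1 y), ← sq_abs (b2 y), ← sq_abs (a2 y * b y)]
    calc 2*𝔩*(|a1 y| * |b1 y|^2) * V y
        ≤ 2*𝔩*(|a1 y| * |b1 y|^2) * W y :=
          mul_le_mul_of_nonneg_left hVW' (by positivity)
      _ ≤ 2*𝔩*K * (a y * |b2 y|^2 * W y + (|b1 y|^2 * W y + (|b2 y|^2 * W y + |a2 y * b y|^2 * W y))) := by
          nlinarith [mul_nonneg (mul_nonneg (mul_nonneg h𝔩0 (sub_nonneg.2 e2)) (sq_nonneg (|b1 y|))) hW0',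
            mul_nonneg (mul_nonneg (mul_nonneg h𝔩0 hK0) (mul_nonneg hAp.le (sq_nonneg (|b2 y|)))) hW0',
            mul_nonneg (mul_nonneg (mul_nonneg h𝔩0 hK0) (sq_nonneg (|b2 y|))) hW0',
            mul_nonneg (mul_nonneg (mul_nonneg h𝔩0 hK0) (sq_nonneg (|a2 y * b y|))) hW0']
  have ipart2 : IntegrableOn (fun y => g y * (b2 y * W y + b1 y * (2*𝔩 * V y))) (Ioi 0) := by
    apply dom (fun y => g y * (b2 y * W y + b1 y * (2*𝔩 * V y))) ((K+1)*(1+6*𝔩)) (cg.mul ((cb2.mul hcW).add (cb1.mul (continuousOn_const.mul hcV))))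
    intro y hy
    have hy0 : (0:ℝ) ≤ y := le_of_lt hy
    have e1 := (haK y).1
    have hA : a y ≤ K := (abs_le.1 e1).2
    have hAp := hapos y
    have hW0' := hW0 y hy0; have hV0' := hV0 y hy0; have hVW' := hVW y hy0
    rw [abs_mul]
    have hgb := absfact y hy
    have h2 : |b2 y * W y + b1 y * (2*𝔩 * V y)| ≤ (|b2 y| + 2*𝔩*|b1 y|) * W y := by
      have h3 := abs_add_le (b2 y * W y) (b1 y * (2*𝔩 * V y))
      have h4 : |b2 y * W y| = |b2 y| * W y := by rw [abs_mul, abs_of_nonneg hW0']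
      have h5 : |b1 y * (2*𝔩 * V y)| = |b1 y| * (2*𝔩 * V y) := by
        rw [abs_mul, abs_of_nonneg (by positivity : (0:ℝ) ≤ 2*𝔩 * V y)]
      rw [h4, h5] at h3
      nlinarith [abs_nonneg (b1 y), mul_nonneg (mul_nonneg h𝔩0 (abs_nonneg (b1 y))) (sub_nonneg.2 hVW')]
    calc |g y| * |b2 y * W y + b1 y * (2*𝔩 * V y)|
        ≤ (|a2 y * b y| + 2*K*|b1 y| + a y * |b2 y|) * ((|b2 y| + 2*𝔩*|b1 y|) * W y) :=
          mul_le_mul hgb h2 (abs_nonneg _) (by positivity)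
      _ = ((|a2 y * b y| + 2*K*|b1 y| + a y * |b2 y|) * (|b2 y| + 2*𝔩*|b1 y|)) * W y := by ring
      _ ≤ ((K+1)*(1+6*𝔩) * (a y * |b2 y|^2 + (|b1 y|^2 + (|b2 y|^2 + |a2 y * b y|^2)))) * W y := by
          apply mul_le_mul_of_nonneg_right ?_ hW0'
          nlinarith [sq_nonneg (|a2 y * b y| - |b2 y|),
            mul_nonneg h𝔩0 (sq_nonneg (|a2 y * b y| - |b1 y|)),
            mul_nonneg hK0 (sq_nonneg (|b1 y| - |b2 y|)),
            mul_nonneg (mul_nonneg hK0 h𝔩0) (sq_nonneg (|b1 y| - |b2 y|)),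
            mul_nonneg (mul_nonneg h𝔩0 (sub_nonneg.2 hA))
              (mul_nonneg (abs_nonneg (b1 y)) (abs_nonneg (b2 y))),
            mul_nonneg h𝔩0 (sq_nonneg (|b1 y|)),
            mul_nonneg (mul_nonneg hK0 h𝔩0) (sq_nonneg (|b1 y|)),
            mul_nonneg h𝔩0 (sq_nonneg (|b2 y|)),
            mul_nonneg hK0 (sq_nonneg (|b2 y|)),
            mul_nonneg (mul_nonneg hK0 h𝔩0) (sq_nonneg (|b2 y|)),
            mul_nonneg h𝔩0 (mul_nonneg hAp.le (sq_nonneg (|b2 y|))),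
            mul_nonneg hK0 (mul_nonneg hAp.le (sq_nonneg (|b2 y|))),
            mul_nonneg (mul_nonneg hK0 h𝔩0) (mul_nonneg hAp.le (sq_nonneg (|b2 y|))),
            mul_nonneg h𝔩0 (sq_nonneg (|a2 y * b y|)),
            mul_nonneg hK0 (sq_nonneg (|a2 y * b y|)),
            mul_nonneg (mul_nonneg hK0 h𝔩0) (sq_nonneg (|a2 y * b y|)),
            sq_nonneg (|b1 y|), sq_nonneg (|b2 y|), sq_nonneg (|a2 y * b y|)]
      _ = (K+1)*(1+6*𝔩) * (a y * b2 y^2 * W y + (b1 y^2 * W y + (b2 y^2 * W y + (a2 y * b y)^2 * W y))) := by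
          rw [← sq_abs (b1 y), ← sq_abs (b2 y), ← sq_abs (a2 y * b y)]; ring
  have IuW : IntegrableOn (fun y => a y * b2 y^2 * W y) (Ioi 0) := Iu
  have ipart1 : IntegrableOn (fun y => g3 y * (b1 y * W y)) (Ioi 0) := by
    have e : (fun y => g3 y * (b1 y * W y)) = (fun y => g3 y * b1 y * W y) :=
      funext fun y => by ring
    rw [e]; exact I3
  -- first integration by parts
  have hibp1 : ∫ y in Ioi (0:ℝ),
      (g3 y * (b1 y * W y) + g y * (b2 y * W y + b1 y * (2*𝔩 * V y)))
      = 0 - ((fun y => g y * (b1 y * W y)) 0) := by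
    refine integral_Ioi_of_hasDerivAt_of_tendsto
      (f := fun y => g y * (b1 y * W y)) ?_ ?_ (ipart1.add ipart2) ?_
    · exact (hgs.continuous.continuousAt.mul
        (hb1s.continuous.continuousAt.mul (hWc 0 le_rfl))).continuousWithinAt
    · intro y hy
      exact (hdg y).mul ((hdb1 y).mul (hW y hy))
    · have hlim : Tendsto (fun y => K * ((|b y * W y| * |b1 y| + 2 * (|b1 y * W y| * |b1 y|))
          + |b2 y * W y| * |b1 y|)) atTop (nhds 0) := by
        have h := (((z1.mul z4).add ((z2.mul z4).const_mul 2)).add (z3.mul z4)).const_mul K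
        simpa using h
      apply squeeze_zero_norm' ?_ hlim
      filter_upwards [eventually_ge_atTop (0:ℝ)] with y hy
      have hW0' := hW0 y hy
      have hgb := hgabs y
      have e1 : |b y * W y| = |b y| * W y := by rw [abs_mul, abs_of_nonneg hW0']
      have e2 : |b1 y * W y| = |b1 y| * W y := by rw [abs_mul, abs_of_nonneg hW0']
      have e3 : |b2 y * W y| = |b2 y| * W y := by rw [abs_mul, abs_of_nonneg hW0']
      have e0 : ‖g y * (b1 y * W y)‖ = |g y| * (|b1 y| * W y) := by
        rw [Real.norm_eq_abs, abs_mul, abs_mul, abs_of_nonneg hW0']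
      rw [e0, e1, e2, e3]
      nlinarith [mul_le_mul_of_nonneg_right hgb (mul_nonneg (abs_nonneg (b1 y)) hW0'),
        abs_nonneg (b1 y), hW0', abs_nonneg (b y), abs_nonneg (b2 y), abs_nonneg (g y)]
  have e_ibp1 : (∫ y in Ioi (0:ℝ), g3 y * (b1 y * W y))
      + (∫ y in Ioi (0:ℝ), g y * (b2 y * W y + b1 y * (2*𝔩 * V y))) = 0 := by
    rw [← integral_add ipart1 ipart2]
    rw [hibp1]
    simp [hb'0]
  -- second integration by parts
  have hibp2 : ∫ y in Ioi (0:ℝ),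
      (a2 y * b1 y^2 * W y + (2*(a1 y * b1 y * b2 y) * W y + 2*𝔩*(a1 y * b1 y^2) * V y))
      = 0 - ((fun y => a1 y * (b1 y^2 * W y)) 0) := by
    refine integral_Ioi_of_hasDerivAt_of_tendsto
      (f := fun y => a1 y * (b1 y^2 * W y)) ?_ ?_ (iJ3.add (iJ7.add iJ4)) ?_
    · exact (ha1s.continuous.continuousAt.mul
        ((hb1s.continuous.continuousAt.pow 2).mul (hWc 0 le_rfl))).continuousWithinAt
    · intro y hy
      have h := (hda1 y).mul (((hdb1 y).pow 2).mul (hW y hy))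
      convert h using 1
      show _ = a2 y * (b1 y ^ 2 * W y) + a1 y * (((2:ℕ):ℝ) * b1 y ^ 1 * b2 y * W y + b1 y ^ 2 * (2 * 𝔩 * V y))
      push_cast
      ring
      all_goals rfl
    · have hlim : Tendsto (fun y => K * (|b1 y * W y| * |b1 y|)) atTop (nhds 0) := by
        have h := (z2.mul z4).const_mul K
        simpa using h
      apply squeeze_zero_norm' ?_ hlim
      filter_upwards [eventually_ge_atTop (0:ℝ)] with y hy
      have hW0' := hW0 y hy
      have e2' := (haK y).2.1
      have e2 : |b1 y * W y| = |b1 y| * W y := by rw [abs_mul, abs_of_nonneg hW0']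
      rw [Real.norm_eq_abs, abs_mul, abs_mul, abs_of_nonneg hW0', abs_pow, e2]
      have h1 : |b1 y|^2 * W y = (|b1 y| * W y) * |b1 y| := by rw [sq]; ring
      rw [h1]
      exact mul_le_mul_of_nonneg_right e2' (by positivity)
  have e_ibp2 : (∫ y in Ioi (0:ℝ), a2 y * b1 y^2 * W y)
      + ((∫ y in Ioi (0:ℝ), 2*(a1 y * b1 y * b2 y) * W y)
        + (∫ y in Ioi (0:ℝ), 2*𝔩*(a1 y * b1 y^2) * V y)) = 0 := by
    have iJ74 : IntegrableOn (fun y => 2*(a1 y * b1 y * b2 y) * W y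
        + 2*𝔩*(a1 y * b1 y^2) * V y) (Ioi 0) := iJ7.add iJ4
    have h := hibp2
    rw [integral_add iJ3 iJ74, integral_add iJ7 iJ4] at h
    simpa [hb'0] using h
  -- expansion of g * h'
  have hexp : (fun y => g y * (b2 y * W y + b1 y * (2*𝔩 * V y))) = (fun y =>
      a2 y * b y * b2 y * W y + (2*𝔩*(a2 y * b y * b1 y) * V y + (2*(a1 y * b1 y * b2 y) * W y +
      (2*𝔩*(a1 y * b1 y^2) * V y + (2*𝔩*(a1 y * b1 y^2) * V y + (a y * b2 y^2 * W y +
      2*𝔩*(a y * b2 y * b1 y) * V y)))))) := funext fun y => by rw [hgy y]; ring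
  have e_exp : (∫ y in Ioi (0:ℝ), g y * (b2 y * W y + b1 y * (2*𝔩 * V y)))
      = (∫ y in Ioi (0:ℝ), a2 y * b y * b2 y * W y)
      + ((∫ y in Ioi (0:ℝ), 2*𝔩*(a2 y * b y * b1 y) * V y)
      + ((∫ y in Ioi (0:ℝ), 2*(a1 y * b1 y * b2 y) * W y)
      + ((∫ y in Ioi (0:ℝ), 2*𝔩*(a1 y * b1 y^2) * V y)
      + ((∫ y in Ioi (0:ℝ), 2*𝔩*(a1 y * b1 y^2) * V y)
      + ((∫ y in Ioi (0:ℝ), a y * b2 y^2 * W y)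
      + (∫ y in Ioi (0:ℝ), 2*𝔩*(a y * b2 y * b1 y) * V y)))))) := by
    have iT6 : IntegrableOn (fun y => a y * b2 y^2 * W y + 2*𝔩*(a y * b2 y * b1 y) * V y)
        (Ioi 0) := IuW.add iP2
    have iT5 : IntegrableOn (fun y => 2*𝔩*(a1 y * b1 y^2) * V y + (a y * b2 y^2 * W y
        + 2*𝔩*(a y * b2 y * b1 y) * V y)) (Ioi 0) := iJ4.add iT6
    have iT4 : IntegrableOn (fun y => 2*𝔩*(a1 y * b1 y^2) * V y + (2*𝔩*(a1 y * b1 y^2) * V y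
        + (a y * b2 y^2 * W y + 2*𝔩*(a y * b2 y * b1 y) * V y))) (Ioi 0) := iJ4.add iT5
    have iT3 : IntegrableOn (fun y => 2*(a1 y * b1 y * b2 y) * W y + (2*𝔩*(a1 y * b1 y^2) * V y
        + (2*𝔩*(a1 y * b1 y^2) * V y + (a y * b2 y^2 * W y + 2*𝔩*(a y * b2 y * b1 y) * V y))))
        (Ioi 0) := iJ7.add iT4
    have iT2 : IntegrableOn (fun y => 2*𝔩*(a2 y * b y * b1 y) * V y
        + (2*(a1 y * b1 y * b2 y) * W y + (2*𝔩*(a1 y * b1 y^2) * V y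
        + (2*𝔩*(a1 y * b1 y^2) * V y + (a y * b2 y^2 * W y + 2*𝔩*(a y * b2 y * b1 y) * V y)))))
        (Ioi 0) := iP6.add iT3
    rw [hexp, integral_add iP5 iT2, integral_add iP6 iT3, integral_add iJ7 iT4,
      integral_add iJ4 iT5, integral_add iJ4 iT6, integral_add IuW iP2]
  -- final assembly
  have hSW : (fun y =>
      a y * (b2 y) ^ 2 * (1+y) ^ (2*𝔩)
      + 2*𝔩 * (a y * b2 y * b1 y) * (1+y) ^ (2*𝔩-1)
      - a2 y * (b1 y) ^ 2 * (1+y) ^ (2*𝔩)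
      + 2*𝔩 * (a1 y * (b1 y) ^ 2) * (1+y) ^ (2*𝔩-1)
      + a2 y * b y * b2 y * (1+y) ^ (2*𝔩)
      + 2*𝔩 * (a2 y * b y * b1 y) * (1+y) ^ (2*𝔩-1)) = (fun y =>
      a y * b2 y^2 * W y + (2*𝔩*(a y * b2 y * b1 y) * V y + (-(a2 y * b1 y^2 * W y) +
      (2*𝔩*(a1 y * b1 y^2) * V y + (a2 y * b y * b2 y * W y +
      2*𝔩*(a2 y * b y * b1 y) * V y))))) := by
    funext y
    simp only [hWdef, hVdef]
    ring
  have hD3 : (fun y => g3 y * b1 y * (1+y) ^ (2*𝔩)) = (fun y => g3 y * (b1 y * W y)) := by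
    funext y
    simp only [hWdef]
    ring
  have iNJ3 : IntegrableOn (fun y => -(a2 y * b1 y^2 * W y)) (Ioi 0) := iJ3.neg
  have iS5 : IntegrableOn (fun y => a2 y * b y * b2 y * W y + 2*𝔩*(a2 y * b y * b1 y) * V y)
      (Ioi 0) := iP5.add iP6
  have iS4 : IntegrableOn (fun y => 2*𝔩*(a1 y * b1 y^2) * V y + (a2 y * b y * b2 y * W y
      + 2*𝔩*(a2 y * b y * b1 y) * V y)) (Ioi 0) := iJ4.add iS5
  have iS3 : IntegrableOn (fun y => -(a2 y * b1 y^2 * W y) + (2*𝔩*(a1 y * b1 y^2) * V y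
      + (a2 y * b y * b2 y * W y + 2*𝔩*(a2 y * b y * b1 y) * V y))) (Ioi 0) := iNJ3.add iS4
  have iS2 : IntegrableOn (fun y => 2*𝔩*(a y * b2 y * b1 y) * V y + (-(a2 y * b1 y^2 * W y)
      + (2*𝔩*(a1 y * b1 y^2) * V y + (a2 y * b y * b2 y * W y
      + 2*𝔩*(a2 y * b y * b1 y) * V y)))) (Ioi 0) := iP2.add iS3
  rw [hSW, hD3, integral_add IuW iS2, integral_add iP2 iS3, integral_add iNJ3 iS4,
    integral_add iJ4 iS5, integral_add iP5 iP6, integral_neg]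
  have eNJ3 : ∫ y in Ioi (0:ℝ), -(a2 y * b1 y^2 * W y)
      = -∫ y in Ioi (0:ℝ), a2 y * b1 y^2 * W y := integral_neg _
  linarith [e_ibp1, e_ibp2, e_exp]


lemma bnd_P2 (𝔩 K A b1v b2v rv Wv Vv : ℝ) (h𝔩 : 1 ≤ 𝔩) (hK0 : 0 ≤ K)
    (hA : 0 < A) (hAK : A ≤ K) (hW0 : 0 ≤ Wv) (hV0 : 0 ≤ Vv) (hVW : Vv ≤ Wv) :
    |2*𝔩*(A * b2v * b1v) * Vv| ≤ 𝔩*K * (A*b2v^2*Wv + (b1v^2*Wv + (b2v^2*Wv + rv^2*Wv))) := by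
  have h𝔩0 : (0:ℝ) ≤ 𝔩 := by linarith
  have habs : |2*𝔩*(A * b2v * b1v) * Vv| = 2*𝔩*(A * |b2v| * |b1v|) * Vv := by
    simp only [abs_mul, abs_two, abs_of_nonneg h𝔩0, abs_of_nonneg hV0, abs_of_pos hA]
  rw [habs, ← sq_abs b1v, ← sq_abs b2v, ← sq_abs rv]
  calc 2*𝔩*(A * |b2v| * |b1v|) * Vv
      ≤ 2*𝔩*(A * |b2v| * |b1v|) * Wv := mul_le_mul_of_nonneg_left hVW (by positivity)
    _ ≤ 𝔩*K*(|b1v|^2 + |b2v|^2) * Wv := by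
        nlinarith [mul_nonneg (mul_nonneg (mul_nonneg h𝔩0 (sub_nonneg.2 hAK))
            (mul_nonneg (abs_nonneg b2v) (abs_nonneg b1v))) hW0,
          mul_nonneg (mul_nonneg (mul_nonneg h𝔩0 hK0) (sq_nonneg (|b1v| - |b2v|))) hW0]
    _ ≤ 𝔩*K * (A * |b2v|^2 * Wv + (|b1v|^2 * Wv + (|b2v|^2 * Wv + |rv|^2 * Wv))) := by
        nlinarith [mul_nonneg (mul_nonneg h𝔩0 hK0)
            (mul_nonneg (mul_nonneg hA.le (sq_nonneg (|b2v|))) hW0),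
          mul_nonneg (mul_nonneg h𝔩0 hK0) (mul_nonneg (sq_nonneg (|rv|)) hW0)]

lemma bnd_P5 (A a2v bv b1v b2v Wv : ℝ) (hA : 0 < A) (hW0 : 0 ≤ Wv) :
    |a2v * bv * b2v * Wv| ≤ 1 * (A*b2v^2*Wv + (b1v^2*Wv + (b2v^2*Wv + (a2v*bv)^2*Wv))) := by
  have habs : |a2v * bv * b2v * Wv| = |a2v * bv| * |b2v| * Wv := by
    simp only [abs_mul, abs_of_nonneg hW0]
  rw [habs, ← sq_abs b1v, ← sq_abs b2v, ← sq_abs (a2v*bv)]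
  nlinarith [mul_nonneg (sq_nonneg (|a2v * bv| - |b2v|)) hW0,
    mul_nonneg (mul_nonneg hA.le (sq_nonneg (|b2v|))) hW0,
    mul_nonneg (sq_nonneg (|b1v|)) hW0]

lemma bnd_P6 (𝔩 A a2v bv b1v b2v Wv Vv : ℝ) (h𝔩 : 1 ≤ 𝔩) (hA : 0 < A)
    (hW0 : 0 ≤ Wv) (hV0 : 0 ≤ Vv) (hVW : Vv ≤ Wv) :
    |2*𝔩*(a2v * bv * b1v) * Vv| ≤ 𝔩 * (A*b2v^2*Wv + (b1v^2*Wv + (b2v^2*Wv + (a2v*bv)^2*Wv))) := by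
  have h𝔩0 : (0:ℝ) ≤ 𝔩 := by linarith
  have habs : |2*𝔩*(a2v * bv * b1v) * Vv| = 2*𝔩*(|a2v * bv| * |b1v|) * Vv := by
    simp only [abs_mul, abs_two, abs_of_nonneg h𝔩0, abs_of_nonneg hV0]
  rw [habs, ← sq_abs b1v, ← sq_abs b2v, ← sq_abs (a2v*bv)]
  calc 2*𝔩*(|a2v * bv| * |b1v|) * Vv
      ≤ 2*𝔩*(|a2v * bv| * |b1v|) * Wv := mul_le_mul_of_nonneg_left hVW (by positivity)
    _ ≤ 𝔩 * (A * |b2v|^2 * Wv + (|b1v|^2 * Wv + (|b2v|^2 * Wv + |a2v*bv|^2 * Wv))) := by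
        nlinarith [mul_nonneg (mul_nonneg h𝔩0 (sq_nonneg (|a2v * bv| - |b1v|))) hW0,
          mul_nonneg (mul_nonneg h𝔩0 (mul_nonneg hA.le (sq_nonneg (|b2v|)))) hW0,
          mul_nonneg (mul_nonneg h𝔩0 (sq_nonneg (|b2v|))) hW0]

lemma bnd_J3 (K A a2v bv b1v b2v Wv : ℝ) (hK0 : 0 ≤ K) (hA : 0 < A) (ha2 : |a2v| ≤ K)
    (hW0 : 0 ≤ Wv) :
    |a2v * b1v^2 * Wv| ≤ K * (A*b2v^2*Wv + (b1v^2*Wv + (b2v^2*Wv + (a2v*bv)^2*Wv))) := by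
  have habs : |a2v * b1v^2 * Wv| = |a2v| * b1v^2 * Wv := by
    simp only [abs_mul, abs_of_nonneg hW0, abs_pow, sq_abs]
  rw [habs, ← sq_abs b1v, ← sq_abs b2v, ← sq_abs (a2v*bv)]
  nlinarith [mul_nonneg (mul_nonneg (sub_nonneg.2 ha2) (sq_nonneg (|b1v|))) hW0,
    mul_nonneg hK0 (mul_nonneg (mul_nonneg hA.le (sq_nonneg (|b2v|))) hW0),
    mul_nonneg hK0 (mul_nonneg (sq_nonneg (|b2v|)) hW0),
    mul_nonneg hK0 (mul_nonneg (sq_nonneg (|a2v*bv|)) hW0)]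

lemma bnd_J4 (𝔩 K A a1v a2v bv b1v b2v Wv Vv : ℝ) (h𝔩 : 1 ≤ 𝔩) (hK0 : 0 ≤ K) (hA : 0 < A)
    (ha1 : |a1v| ≤ K) (hW0 : 0 ≤ Wv) (hV0 : 0 ≤ Vv) (hVW : Vv ≤ Wv) :
    |2*𝔩*(a1v * b1v^2) * Vv| ≤ 2*𝔩*K * (A*b2v^2*Wv + (b1v^2*Wv + (b2v^2*Wv + (a2v*bv)^2*Wv))) := by
  have h𝔩0 : (0:ℝ) ≤ 𝔩 := by linarith
  have habs : |2*𝔩*(a1v * b1v^2) * Vv| = 2*𝔩*(|a1v| * b1v^2) * Vv := by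
    simp only [abs_mul, abs_two, abs_of_nonneg h𝔩0, abs_of_nonneg hV0, abs_pow, sq_abs]
  rw [habs, ← sq_abs b1v, ← sq_abs b2v, ← sq_abs (a2v*bv)]
  calc 2*𝔩*(|a1v| * |b1v|^2) * Vv
      ≤ 2*𝔩*(|a1v| * |b1v|^2) * Wv := mul_le_mul_of_nonneg_left hVW (by positivity)
    _ ≤ 2*𝔩*K * (A * |b2v|^2 * Wv + (|b1v|^2 * Wv + (|b2v|^2 * Wv + |a2v*bv|^2 * Wv))) := by
        nlinarith [mul_nonneg (mul_nonneg (mul_nonneg h𝔩0 (sub_nonneg.2 ha1)) (sq_nonneg (|b1v|))) hW0,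
          mul_nonneg (mul_nonneg (mul_nonneg h𝔩0 hK0) (mul_nonneg hA.le (sq_nonneg (|b2v|)))) hW0,
          mul_nonneg (mul_nonneg (mul_nonneg h𝔩0 hK0) (sq_nonneg (|b2v|))) hW0,
          mul_nonneg (mul_nonneg (mul_nonneg h𝔩0 hK0) (sq_nonneg (|a2v*bv|))) hW0]

lemma bnd_P2cs (𝔩 K A b1v b2v Wv Vv : ℝ) (h𝔩 : 1 ≤ 𝔩) (hK0 : 0 ≤ K)
    (hA : 0 < A) (hAK : A ≤ K) (hW0 : 0 ≤ Wv) (hV0 : 0 ≤ Vv) (hVW : Vv ≤ Wv) :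
    |2*𝔩*(A * b2v * b1v) * Vv| ≤ 2*𝔩*(K+1) *
      ((Real.sqrt A * |b2v| * Real.sqrt Wv) * (|b1v| * Real.sqrt Wv)) := by
  have h𝔩0 : (0:ℝ) ≤ 𝔩 := by linarith
  have habs : |2*𝔩*(A * b2v * b1v) * Vv| = 2*𝔩*(A * |b2v| * |b1v|) * Vv := by
    simp only [abs_mul, abs_two, abs_of_nonneg h𝔩0, abs_of_nonneg hV0, abs_of_pos hA]
  have hsA : Real.sqrt A * Real.sqrt A = A := Real.mul_self_sqrt hA.le
  have hsW : Real.sqrt Wv * Real.sqrt Wv = Wv := Real.mul_self_sqrt hW0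
  have hsAK : Real.sqrt A ≤ K + 1 := by
    have h1 : Real.sqrt A ≤ Real.sqrt K := Real.sqrt_le_sqrt hAK
    have h2 : Real.sqrt K ≤ K + 1 := by
      nlinarith [Real.sq_sqrt hK0, Real.sqrt_nonneg K, sq_nonneg (Real.sqrt K - 1)]
    linarith
  rw [habs]
  have e1 : (Real.sqrt A * |b2v| * Real.sqrt Wv) * (|b1v| * Real.sqrt Wv)
      = Real.sqrt A * (|b2v| * |b1v| * Wv) := by
    rw [show (Real.sqrt A * |b2v| * Real.sqrt Wv) * (|b1v| * Real.sqrt Wv)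
      = Real.sqrt A * (|b2v| * |b1v| * (Real.sqrt Wv * Real.sqrt Wv)) from by ring, hsW]
  rw [e1]
  calc 2*𝔩*(A * |b2v| * |b1v|) * Vv ≤ 2*𝔩*(A * |b2v| * |b1v|) * Wv :=
        mul_le_mul_of_nonneg_left hVW (by positivity)
    _ = 2*𝔩*(Real.sqrt A * Real.sqrt A * |b2v| * |b1v|) * Wv := by rw [hsA]
    _ ≤ 2*𝔩*((K+1) * Real.sqrt A * |b2v| * |b1v|) * Wv := by
        have : Real.sqrt A * Real.sqrt A * |b2v| * |b1v| ≤ (K+1) * Real.sqrt A * |b2v| * |b1v| := by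
          apply mul_le_mul_of_nonneg_right ?_ (abs_nonneg b1v)
          apply mul_le_mul_of_nonneg_right ?_ (abs_nonneg b2v)
          exact mul_le_mul_of_nonneg_right hsAK (Real.sqrt_nonneg A)
        have h2 := mul_le_mul_of_nonneg_right
          (mul_le_mul_of_nonneg_left this (by positivity : (0:ℝ) ≤ 2*𝔩)) hW0
        calc 2*𝔩*(Real.sqrt A * Real.sqrt A * |b2v| * |b1v|) * Wv
            = 2*𝔩 * (Real.sqrt A * Real.sqrt A * |b2v| * |b1v|) * Wv := by ring
          _ ≤ 2*𝔩 * ((K+1) * Real.sqrt A * |b2v| * |b1v|) * Wv := h2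
          _ = 2*𝔩*((K+1) * Real.sqrt A * |b2v| * |b1v|) * Wv := by ring
    _ = 2*𝔩*(K+1) * (Real.sqrt A * (|b2v| * |b1v| * Wv)) := by ring

lemma bnd_P5cs (a2v bv b2v Wv : ℝ) (hW0 : 0 ≤ Wv) :
    |a2v * bv * b2v * Wv| ≤ (|a2v * bv| * Real.sqrt Wv) * (|b2v| * Real.sqrt Wv) := by
  have hsW : Real.sqrt Wv * Real.sqrt Wv = Wv := Real.mul_self_sqrt hW0
  have habs : |a2v * bv * b2v * Wv| = |a2v * bv| * |b2v| * Wv := by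
    simp only [abs_mul, abs_of_nonneg hW0]
  rw [habs, show (|a2v * bv| * Real.sqrt Wv) * (|b2v| * Real.sqrt Wv)
    = |a2v * bv| * |b2v| * (Real.sqrt Wv * Real.sqrt Wv) from by ring, hsW]

lemma bnd_P6cs (𝔩 a2v bv b1v Wv Vv : ℝ) (h𝔩 : 1 ≤ 𝔩)
    (hW0 : 0 ≤ Wv) (hV0 : 0 ≤ Vv) (hVW : Vv ≤ Wv) :
    |2*𝔩*(a2v * bv * b1v) * Vv| ≤ 2*𝔩 * ((|a2v * bv| * Real.sqrt Wv) * (|b1v| * Real.sqrt Wv)) := by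
  have h𝔩0 : (0:ℝ) ≤ 𝔩 := by linarith
  have hsW : Real.sqrt Wv * Real.sqrt Wv = Wv := Real.mul_self_sqrt hW0
  have habs : |2*𝔩*(a2v * bv * b1v) * Vv| = 2*𝔩*(|a2v * bv| * |b1v|) * Vv := by
    simp only [abs_mul, abs_two, abs_of_nonneg h𝔩0, abs_of_nonneg hV0]
  rw [habs]
  calc 2*𝔩*(|a2v * bv| * |b1v|) * Vv ≤ 2*𝔩*(|a2v * bv| * |b1v|) * Wv :=
        mul_le_mul_of_nonneg_left hVW (by positivity)
    _ = 2*𝔩 * ((|a2v * bv| * Real.sqrt Wv) * (|b1v| * Real.sqrt Wv)) := by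
        rw [show 2*𝔩 * ((|a2v * bv| * Real.sqrt Wv) * (|b1v| * Real.sqrt Wv))
          = 2*𝔩*(|a2v * bv| * |b1v|) * (Real.sqrt Wv * Real.sqrt Wv) from by ring, hsW]

/-- Coercivity of the integration-by-parts step in the quotient
energy estimate: for smooth positive `ū_θ` bounded together with `∂_y ū_θ, ∂_y² ū_θ`
by `K`, and smooth `q` with `q(x,0) = ∂_y q(x,0) = 0` decaying at `y = ∞`, with weight
`w = (1+y)^𝔩`,
`-∬ ∂_y³(ū_θ q) q_y w² ≥ ‖√ū_θ q_{yy} w‖² - C(K+1)(‖q_y w‖² + ‖q_y w‖·‖√ū_θ q_{yy} w‖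
  + ‖∂_y²ū_θ q w‖·(‖q_{yy} w‖ + ‖q_y w‖))`. -/
theorem stmt_17 (𝔩 : ℝ) (h𝔩 : 1 ≤ 𝔩) :
    ∃ C : ℝ, 0 < C ∧
      ∀ (x0 K : ℝ) (uθ q : ℝ → ℝ → ℝ),
        0 < x0 → 0 ≤ K →
        ContDiff ℝ (⊤ : ℕ∞) (Function.uncurry uθ) →
        ContDiff ℝ (⊤ : ℕ∞) (Function.uncurry q) →
        (∀ x y : ℝ, 0 < uθ x y) →
        (∀ x y : ℝ, |uθ x y| ≤ K ∧ |deriv (uθ x) y| ≤ K ∧ |iteratedDeriv 2 (uθ x) y| ≤ K) →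
        (∀ x : ℝ, q x 0 = 0) →
        (∀ x : ℝ, deriv (q x) 0 = 0) →
        (∀ x ∈ Icc (0:ℝ) x0,
          Tendsto (fun y => q x y * (1 + y) ^ (2 * 𝔩)) atTop (nhds 0) ∧
          Tendsto (fun y => deriv (q x) y * (1 + y) ^ (2 * 𝔩)) atTop (nhds 0) ∧
          Tendsto (fun y => iteratedDeriv 2 (q x) y * (1 + y) ^ (2 * 𝔩)) atTop (nhds 0)) →
        IntegrableOn (fun p : ℝ × ℝ =>
            iteratedDeriv 3 (fun y => uθ p.1 y * q p.1 y) p.2 * deriv (q p.1) p.2 *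
              ((1 + p.2) ^ 𝔩) ^ 2) (Ioc (0:ℝ) x0 ×ˢ Ioi (0:ℝ)) →
        IntegrableOn (fun p : ℝ × ℝ =>
            uθ p.1 p.2 * (iteratedDeriv 2 (q p.1) p.2) ^ 2 * ((1 + p.2) ^ 𝔩) ^ 2)
          (Ioc (0:ℝ) x0 ×ˢ Ioi (0:ℝ)) →
        IntegrableOn (fun p : ℝ × ℝ =>
            (deriv (q p.1) p.2 * (1 + p.2) ^ 𝔩) ^ 2) (Ioc (0:ℝ) x0 ×ˢ Ioi (0:ℝ)) →
        IntegrableOn (fun p : ℝ × ℝ =>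
            (iteratedDeriv 2 (q p.1) p.2 * (1 + p.2) ^ 𝔩) ^ 2)
          (Ioc (0:ℝ) x0 ×ˢ Ioi (0:ℝ)) →
        IntegrableOn (fun p : ℝ × ℝ =>
            (iteratedDeriv 2 (uθ p.1) p.2 * q p.1 p.2 * (1 + p.2) ^ 𝔩) ^ 2)
          (Ioc (0:ℝ) x0 ×ˢ Ioi (0:ℝ)) →
        -(∫ p in Ioc (0:ℝ) x0 ×ˢ Ioi (0:ℝ),
            iteratedDeriv 3 (fun y => uθ p.1 y * q p.1 y) p.2 * deriv (q p.1) p.2 *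
              ((1 + p.2) ^ 𝔩) ^ 2) ≥
          (∫ p in Ioc (0:ℝ) x0 ×ˢ Ioi (0:ℝ),
            uθ p.1 p.2 * (iteratedDeriv 2 (q p.1) p.2) ^ 2 * ((1 + p.2) ^ 𝔩) ^ 2)
          - C * (K + 1) *
            ((∫ p in Ioc (0:ℝ) x0 ×ˢ Ioi (0:ℝ),
                (deriv (q p.1) p.2 * (1 + p.2) ^ 𝔩) ^ 2)
             + Real.sqrt (∫ p in Ioc (0:ℝ) x0 ×ˢ Ioi (0:ℝ),
                  (deriv (q p.1) p.2 * (1 + p.2) ^ 𝔩) ^ 2) *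
               Real.sqrt (∫ p in Ioc (0:ℝ) x0 ×ˢ Ioi (0:ℝ),
                  uθ p.1 p.2 * (iteratedDeriv 2 (q p.1) p.2) ^ 2 * ((1 + p.2) ^ 𝔩) ^ 2)
             + Real.sqrt (∫ p in Ioc (0:ℝ) x0 ×ˢ Ioi (0:ℝ),
                  (iteratedDeriv 2 (uθ p.1) p.2 * q p.1 p.2 * (1 + p.2) ^ 𝔩) ^ 2) *
               (Real.sqrt (∫ p in Ioc (0:ℝ) x0 ×ˢ Ioi (0:ℝ),
                    (iteratedDeriv 2 (q p.1) p.2 * (1 + p.2) ^ 𝔩) ^ 2)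
                + Real.sqrt (∫ p in Ioc (0:ℝ) x0 ×ˢ Ioi (0:ℝ),
                    (deriv (q p.1) p.2 * (1 + p.2) ^ 𝔩) ^ 2))) := by
  have h𝔩0 : (0:ℝ) ≤ 𝔩 := by linarith
  refine ⟨8*𝔩, by linarith, ?_⟩
  intro x0 K uθ q hx0 hK0 huθ hq hpos hbound hq0 hq0' hdecay hI3 hIu hI1 hI2 hI4
  obtain ⟨Q1, hQ1s, hQ1d⟩ := pd_exists hq
  obtain ⟨Q2, hQ2s, hQ2d⟩ := pd_exists hQ1s
  obtain ⟨U1, hU1s, hU1d⟩ := pd_exists huθ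
  obtain ⟨U2, hU2s, hU2d⟩ := pd_exists hU1s
  have eQ1 : ∀ x y : ℝ, deriv (q x) y = Q1 (x, y) := fun x y => (hQ1d x y).deriv
  have eU1 : ∀ x y : ℝ, deriv (uθ x) y = U1 (x, y) := fun x y => (hU1d x y).deriv
  have eQ2 : ∀ x y : ℝ, iteratedDeriv 2 (q x) y = Q2 (x, y) := by
    intro x y
    rw [iteratedDeriv_succ, iteratedDeriv_one]
    have h : deriv (q x) = fun y => Q1 (x, y) := funext (eQ1 x)
    rw [h]
    exact (hQ2d x y).deriv
  have eU2 : ∀ x y : ℝ, iteratedDeriv 2 (uθ x) y = U2 (x, y) := by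
    intro x y
    rw [iteratedDeriv_succ, iteratedDeriv_one]
    have h : deriv (uθ x) = fun y => U1 (x, y) := funext (eU1 x)
    rw [h]
    exact (hU2d x y).deriv
  set D := Ioc (0:ℝ) x0 ×ˢ Ioi (0:ℝ) with hD
  have hDm : MeasurableSet D := measurableSet_Ioc.prod measurableSet_Ioi
  have hwsq : ∀ p : ℝ × ℝ, p ∈ D → ((1+p.2)^𝔩)^2 = (1+p.2)^(2*𝔩) := by
    intro p hp
    have hp2 : (0:ℝ) < p.2 := hp.2
    have h0 : (0:ℝ) ≤ 1 + p.2 := by linarith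
    rw [← Real.rpow_natCast ((1+p.2)^𝔩) 2, ← Real.rpow_mul h0]
    norm_num [mul_comm]
  -- EqOn conversions to the (1+y)^(2𝔩) forms
  have eFd : EqOn (fun p : ℝ×ℝ => iteratedDeriv 3 (fun y => uθ p.1 y * q p.1 y) p.2 *
        deriv (q p.1) p.2 * ((1+p.2)^𝔩)^2)
      (fun p : ℝ×ℝ => iteratedDeriv 3 (fun y => uθ p.1 y * q p.1 y) p.2 *
        deriv (q p.1) p.2 * (1+p.2)^(2*𝔩)) D := fun p hp => by
    simp only; rw [hwsq p hp]
  have eFu : EqOn (fun p : ℝ×ℝ => uθ p.1 p.2 * (iteratedDeriv 2 (q p.1) p.2)^2 * ((1+p.2)^𝔩)^2)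
      (fun p : ℝ×ℝ => uθ p.1 p.2 * (iteratedDeriv 2 (q p.1) p.2)^2 * (1+p.2)^(2*𝔩)) D :=
    fun p hp => by simp only; rw [hwsq p hp]
  have eF1 : EqOn (fun p : ℝ×ℝ => (deriv (q p.1) p.2 * (1+p.2)^𝔩)^2)
      (fun p : ℝ×ℝ => (deriv (q p.1) p.2)^2 * (1+p.2)^(2*𝔩)) D := fun p hp => by
    simp only [mul_pow]; rw [hwsq p hp]
  have eF2 : EqOn (fun p : ℝ×ℝ => (iteratedDeriv 2 (q p.1) p.2 * (1+p.2)^𝔩)^2)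
      (fun p : ℝ×ℝ => (iteratedDeriv 2 (q p.1) p.2)^2 * (1+p.2)^(2*𝔩)) D := fun p hp => by
    simp only [mul_pow]; rw [hwsq p hp]
  have eF4 : EqOn (fun p : ℝ×ℝ => (iteratedDeriv 2 (uθ p.1) p.2 * q p.1 p.2 * (1+p.2)^𝔩)^2)
      (fun p : ℝ×ℝ => (iteratedDeriv 2 (uθ p.1) p.2 * q p.1 p.2)^2 * (1+p.2)^(2*𝔩)) D :=
    fun p hp => by simp only [mul_pow]; rw [hwsq p hp]
  have hI3' := hI3.congr_fun eFd hDm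
  have hIu' := hIu.congr_fun eFu hDm
  have hI1' := hI1.congr_fun eF1 hDm
  have hI2' := hI2.congr_fun eF2 hDm
  have hI4' := hI4.congr_fun eF4 hDm
  rw [setIntegral_congr_fun hDm eFd, setIntegral_congr_fun hDm eFu,
    setIntegral_congr_fun hDm eF1, setIntegral_congr_fun hDm eF2,
    setIntegral_congr_fun hDm eF4]
  -- measure bookkeeping
  have hprod : (volume.restrict (Ioc (0:ℝ) x0)).prod (volume.restrict (Ioi (0:ℝ)))
      = (volume : Measure (ℝ×ℝ)).restrict D := by
    rw [Measure.prod_restrict, ← Measure.volume_eq_prod]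
  -- continuity prelims
  have cU : Continuous (fun p : ℝ×ℝ => uθ p.1 p.2) := huθ.continuous
  have cQ : Continuous (fun p : ℝ×ℝ => q p.1 p.2) := hq.continuous
  have cQ1 : Continuous Q1 := hQ1s.continuous
  have cQ2 : Continuous Q2 := hQ2s.continuous
  have cU1 : Continuous U1 := hU1s.continuous
  have cU2 : Continuous U2 := hU2s.continuous
  have hcWp : ContinuousOn (fun p : ℝ×ℝ => (1+p.2)^(2*𝔩)) D := by
    intro p hp
    have hp2 : (0:ℝ) < p.2 := hp.2
    have h0 : (0:ℝ) < 1 + p.2 := by linarith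
    have h1 : ContinuousAt (fun p : ℝ×ℝ => 1 + p.2) p := by fun_prop
    exact (h1.rpow_const (Or.inl h0.ne')).continuousWithinAt
  have hcVp : ContinuousOn (fun p : ℝ×ℝ => (1+p.2)^(2*𝔩-1)) D := by
    intro p hp
    have hp2 : (0:ℝ) < p.2 := hp.2
    have h0 : (0:ℝ) < 1 + p.2 := by linarith
    have h1 : ContinuousAt (fun p : ℝ×ℝ => 1 + p.2) p := by fun_prop
    exact (h1.rpow_const (Or.inl h0.ne')).continuousWithinAt
  -- domination helper
  have hFFg : IntegrableOn (fun p : ℝ×ℝ =>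
      uθ p.1 p.2 * (iteratedDeriv 2 (q p.1) p.2)^2 * (1+p.2)^(2*𝔩)
      + ((deriv (q p.1) p.2)^2 * (1+p.2)^(2*𝔩)
      + ((iteratedDeriv 2 (q p.1) p.2)^2 * (1+p.2)^(2*𝔩)
      + (iteratedDeriv 2 (uθ p.1) p.2 * q p.1 p.2)^2 * (1+p.2)^(2*𝔩)))) D :=
    hIu'.add (hI1'.add (hI2'.add hI4'))
  have domG : ∀ (f : ℝ×ℝ → ℝ) (c : ℝ), ContinuousOn f D →
      (∀ p ∈ D, |f p| ≤ c * (uθ p.1 p.2 * (iteratedDeriv 2 (q p.1) p.2)^2 * (1+p.2)^(2*𝔩)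
        + ((deriv (q p.1) p.2)^2 * (1+p.2)^(2*𝔩)
        + ((iteratedDeriv 2 (q p.1) p.2)^2 * (1+p.2)^(2*𝔩)
        + (iteratedDeriv 2 (uθ p.1) p.2 * q p.1 p.2)^2 * (1+p.2)^(2*𝔩))))) →
      IntegrableOn f D := by
    intro f c hc hbd
    exact (hFFg.const_mul c).mono' (hc.aestronglyMeasurable hDm)
      ((ae_restrict_iff' hDm).2 (ae_of_all _ hbd))
  -- pieces integrability
  have wfacts : ∀ p : ℝ×ℝ, p ∈ D → (0:ℝ) ≤ (1+p.2)^(2*𝔩) ∧ (0:ℝ) ≤ (1+p.2)^(2*𝔩-1) ∧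
      (1+p.2)^(2*𝔩-1) ≤ (1+p.2)^(2*𝔩) := by
    intro p hp
    have hp2 : (0:ℝ) < p.2 := hp.2
    exact ⟨Real.rpow_nonneg (by linarith) _, Real.rpow_nonneg (by linarith) _,
      Real.rpow_le_rpow_of_exponent_le (by linarith) (by linarith)⟩
  have iP2g : IntegrableOn (fun p : ℝ×ℝ => 2*𝔩*(uθ p.1 p.2 * iteratedDeriv 2 (q p.1) p.2 *
      deriv (q p.1) p.2) * (1+p.2)^(2*𝔩-1)) D := by
    apply domG _ (𝔩*K) ?_ ?_
    · have h : (fun p : ℝ×ℝ => 2*𝔩*(uθ p.1 p.2 * iteratedDeriv 2 (q p.1) p.2 * deriv (q p.1) p.2))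
          = fun p => 2*𝔩*(uθ p.1 p.2 * Q2 p * Q1 p) := by
        funext p; rw [eQ2, eQ1]
      have h2 : ContinuousOn (fun p : ℝ×ℝ => 2*𝔩*(uθ p.1 p.2 * iteratedDeriv 2 (q p.1) p.2 *
          deriv (q p.1) p.2)) D := by
        rw [h]; exact (continuous_const.mul ((cU.mul cQ2).mul cQ1)).continuousOn
      exact h2.mul hcVp
    · intro p hp
      obtain ⟨w0, v0, vw⟩ := wfacts p hp
      exact bnd_P2 𝔩 K _ _ _ _ _ _ h𝔩 hK0 (hpos p.1 p.2) ((abs_le.1 (hbound p.1 p.2).1).2) w0 v0 vw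
  have iJ3g : IntegrableOn (fun p : ℝ×ℝ => iteratedDeriv 2 (uθ p.1) p.2 *
      (deriv (q p.1) p.2)^2 * (1+p.2)^(2*𝔩)) D := by
    apply domG _ K ?_ ?_
    · have h : (fun p : ℝ×ℝ => iteratedDeriv 2 (uθ p.1) p.2 * (deriv (q p.1) p.2)^2)
          = fun p => U2 p * (Q1 p)^2 := by
        funext p; rw [eU2, eQ1]
      have h2 : ContinuousOn (fun p : ℝ×ℝ => iteratedDeriv 2 (uθ p.1) p.2 *
          (deriv (q p.1) p.2)^2) D := by
        rw [h]; exact (cU2.mul (cQ1.pow 2)).continuousOn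
      exact h2.mul hcWp
    · intro p hp
      obtain ⟨w0, v0, vw⟩ := wfacts p hp
      exact bnd_J3 K _ _ _ _ _ _ hK0 (hpos p.1 p.2) ((hbound p.1 p.2).2.2) w0
  have iJ4g : IntegrableOn (fun p : ℝ×ℝ => 2*𝔩*(deriv (uθ p.1) p.2 *
      (deriv (q p.1) p.2)^2) * (1+p.2)^(2*𝔩-1)) D := by
    apply domG _ (2*𝔩*K) ?_ ?_
    · have h : (fun p : ℝ×ℝ => 2*𝔩*(deriv (uθ p.1) p.2 * (deriv (q p.1) p.2)^2))
          = fun p => 2*𝔩*(U1 p * (Q1 p)^2) := by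
        funext p; rw [eU1, eQ1]
      have h2 : ContinuousOn (fun p : ℝ×ℝ => 2*𝔩*(deriv (uθ p.1) p.2 *
          (deriv (q p.1) p.2)^2)) D := by
        rw [h]; exact (continuous_const.mul (cU1.mul (cQ1.pow 2))).continuousOn
      exact h2.mul hcVp
    · intro p hp
      obtain ⟨w0, v0, vw⟩ := wfacts p hp
      exact bnd_J4 𝔩 K _ _ _ _ _ _ _ _ h𝔩 hK0 (hpos p.1 p.2) ((hbound p.1 p.2).2.1) w0 v0 vw
  have iP5g : IntegrableOn (fun p : ℝ×ℝ => iteratedDeriv 2 (uθ p.1) p.2 * q p.1 p.2 *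
      iteratedDeriv 2 (q p.1) p.2 * (1+p.2)^(2*𝔩)) D := by
    apply domG _ 1 ?_ ?_
    · have h : (fun p : ℝ×ℝ => iteratedDeriv 2 (uθ p.1) p.2 * q p.1 p.2 *
          iteratedDeriv 2 (q p.1) p.2) = fun p => U2 p * q p.1 p.2 * Q2 p := by
        funext p; rw [eU2, eQ2]
      have h2 : ContinuousOn (fun p : ℝ×ℝ => iteratedDeriv 2 (uθ p.1) p.2 * q p.1 p.2 *
          iteratedDeriv 2 (q p.1) p.2) D := by
        rw [h]; exact ((cU2.mul cQ).mul cQ2).continuousOn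
      exact h2.mul hcWp
    · intro p hp
      obtain ⟨w0, v0, vw⟩ := wfacts p hp
      exact bnd_P5 _ _ _ _ _ _ (hpos p.1 p.2) w0
  have iP6g : IntegrableOn (fun p : ℝ×ℝ => 2*𝔩*(iteratedDeriv 2 (uθ p.1) p.2 * q p.1 p.2 *
      deriv (q p.1) p.2) * (1+p.2)^(2*𝔩-1)) D := by
    apply domG _ 𝔩 ?_ ?_
    · have h : (fun p : ℝ×ℝ => 2*𝔩*(iteratedDeriv 2 (uθ p.1) p.2 * q p.1 p.2 *
          deriv (q p.1) p.2)) = fun p => 2*𝔩*(U2 p * q p.1 p.2 * Q1 p) := by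
        funext p; rw [eU2, eQ1]
      have h2 : ContinuousOn (fun p : ℝ×ℝ => 2*𝔩*(iteratedDeriv 2 (uθ p.1) p.2 * q p.1 p.2 *
          deriv (q p.1) p.2)) D := by
        rw [h]; exact (continuous_const.mul ((cU2.mul cQ).mul cQ1)).continuousOn
      exact h2.mul hcVp
    · intro p hp
      obtain ⟨w0, v0, vw⟩ := wfacts p hp
      exact bnd_P6 𝔩 _ _ _ _ _ _ _ h𝔩 (hpos p.1 p.2) w0 v0 vw
  -- the function S (the slice identity's left-hand integrand, globally)
  set S : ℝ×ℝ → ℝ := fun p =>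
    uθ p.1 p.2 * (iteratedDeriv 2 (q p.1) p.2)^2 * (1+p.2)^(2*𝔩)
    + 2*𝔩 * (uθ p.1 p.2 * iteratedDeriv 2 (q p.1) p.2 * deriv (q p.1) p.2) * (1+p.2)^(2*𝔩-1)
    - iteratedDeriv 2 (uθ p.1) p.2 * (deriv (q p.1) p.2)^2 * (1+p.2)^(2*𝔩)
    + 2*𝔩 * (deriv (uθ p.1) p.2 * (deriv (q p.1) p.2)^2) * (1+p.2)^(2*𝔩-1)
    + iteratedDeriv 2 (uθ p.1) p.2 * q p.1 p.2 * iteratedDeriv 2 (q p.1) p.2 * (1+p.2)^(2*𝔩)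
    + 2*𝔩 * (iteratedDeriv 2 (uθ p.1) p.2 * q p.1 p.2 * deriv (q p.1) p.2) * (1+p.2)^(2*𝔩-1)
    with hSdef
  have iNJ3 : IntegrableOn (fun p : ℝ×ℝ => -(iteratedDeriv 2 (uθ p.1) p.2 *
      (deriv (q p.1) p.2)^2 * (1+p.2)^(2*𝔩))) D := iJ3g.neg
  have iB5 : IntegrableOn (fun p : ℝ×ℝ =>
      iteratedDeriv 2 (uθ p.1) p.2 * q p.1 p.2 * iteratedDeriv 2 (q p.1) p.2 * (1+p.2)^(2*𝔩)
      + 2*𝔩*(iteratedDeriv 2 (uθ p.1) p.2 * q p.1 p.2 * deriv (q p.1) p.2) * (1+p.2)^(2*𝔩-1)) D :=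
    iP5g.add iP6g
  have iB4 : IntegrableOn (fun p : ℝ×ℝ =>
      2*𝔩*(deriv (uθ p.1) p.2 * (deriv (q p.1) p.2)^2) * (1+p.2)^(2*𝔩-1)
      + (iteratedDeriv 2 (uθ p.1) p.2 * q p.1 p.2 * iteratedDeriv 2 (q p.1) p.2 * (1+p.2)^(2*𝔩)
      + 2*𝔩*(iteratedDeriv 2 (uθ p.1) p.2 * q p.1 p.2 * deriv (q p.1) p.2) * (1+p.2)^(2*𝔩-1))) D :=
    iJ4g.add iB5
  have iB3 : IntegrableOn (fun p : ℝ×ℝ =>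
      -(iteratedDeriv 2 (uθ p.1) p.2 * (deriv (q p.1) p.2)^2 * (1+p.2)^(2*𝔩))
      + (2*𝔩*(deriv (uθ p.1) p.2 * (deriv (q p.1) p.2)^2) * (1+p.2)^(2*𝔩-1)
      + (iteratedDeriv 2 (uθ p.1) p.2 * q p.1 p.2 * iteratedDeriv 2 (q p.1) p.2 * (1+p.2)^(2*𝔩)
      + 2*𝔩*(iteratedDeriv 2 (uθ p.1) p.2 * q p.1 p.2 * deriv (q p.1) p.2) * (1+p.2)^(2*𝔩-1)))) D :=
    iNJ3.add iB4
  have iB2 : IntegrableOn (fun p : ℝ×ℝ =>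
      2*𝔩*(uθ p.1 p.2 * iteratedDeriv 2 (q p.1) p.2 * deriv (q p.1) p.2) * (1+p.2)^(2*𝔩-1)
      + (-(iteratedDeriv 2 (uθ p.1) p.2 * (deriv (q p.1) p.2)^2 * (1+p.2)^(2*𝔩))
      + (2*𝔩*(deriv (uθ p.1) p.2 * (deriv (q p.1) p.2)^2) * (1+p.2)^(2*𝔩-1)
      + (iteratedDeriv 2 (uθ p.1) p.2 * q p.1 p.2 * iteratedDeriv 2 (q p.1) p.2 * (1+p.2)^(2*𝔩)
      + 2*𝔩*(iteratedDeriv 2 (uθ p.1) p.2 * q p.1 p.2 * deriv (q p.1) p.2) * (1+p.2)^(2*𝔩-1))))) D :=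
    iP2g.add iB3
  have hSsum : S = fun p : ℝ×ℝ =>
      uθ p.1 p.2 * (iteratedDeriv 2 (q p.1) p.2)^2 * (1+p.2)^(2*𝔩)
      + (2*𝔩*(uθ p.1 p.2 * iteratedDeriv 2 (q p.1) p.2 * deriv (q p.1) p.2) * (1+p.2)^(2*𝔩-1)
      + (-(iteratedDeriv 2 (uθ p.1) p.2 * (deriv (q p.1) p.2)^2 * (1+p.2)^(2*𝔩))
      + (2*𝔩*(deriv (uθ p.1) p.2 * (deriv (q p.1) p.2)^2) * (1+p.2)^(2*𝔩-1)
      + (iteratedDeriv 2 (uθ p.1) p.2 * q p.1 p.2 * iteratedDeriv 2 (q p.1) p.2 * (1+p.2)^(2*𝔩)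
      + 2*𝔩*(iteratedDeriv 2 (uθ p.1) p.2 * q p.1 p.2 * deriv (q p.1) p.2) * (1+p.2)^(2*𝔩-1))))) := by
    funext p; simp only [hSdef]; ring
  have hSint : IntegrableOn S D := by
    rw [hSsum]; exact hIu'.add iB2
  have hSplit : ∫ p in D, S p =
      (∫ p in D, uθ p.1 p.2 * (iteratedDeriv 2 (q p.1) p.2)^2 * (1+p.2)^(2*𝔩))
      + ((∫ p in D, 2*𝔩*(uθ p.1 p.2 * iteratedDeriv 2 (q p.1) p.2 * deriv (q p.1) p.2) * (1+p.2)^(2*𝔩-1))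
      + (-(∫ p in D, iteratedDeriv 2 (uθ p.1) p.2 * (deriv (q p.1) p.2)^2 * (1+p.2)^(2*𝔩))
      + ((∫ p in D, 2*𝔩*(deriv (uθ p.1) p.2 * (deriv (q p.1) p.2)^2) * (1+p.2)^(2*𝔩-1))
      + ((∫ p in D, iteratedDeriv 2 (uθ p.1) p.2 * q p.1 p.2 * iteratedDeriv 2 (q p.1) p.2 * (1+p.2)^(2*𝔩))
      + (∫ p in D, 2*𝔩*(iteratedDeriv 2 (uθ p.1) p.2 * q p.1 p.2 * deriv (q p.1) p.2) * (1+p.2)^(2*𝔩-1)))))) := by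
    rw [hSsum, integral_add hIu' iB2, integral_add iP2g iB3, integral_add iNJ3 iB4,
      integral_add iJ4g iB5, integral_add iP5g iP6g, integral_neg]
  -- Fubini and the sliced identity
  have hFdprod : Integrable (fun p : ℝ×ℝ => iteratedDeriv 3 (fun y => uθ p.1 y * q p.1 y) p.2 *
      deriv (q p.1) p.2 * (1+p.2)^(2*𝔩))
      ((volume.restrict (Ioc (0:ℝ) x0)).prod (volume.restrict (Ioi (0:ℝ)))) := by
    rw [hprod]; exact hI3'
  have hFuprod : Integrable (fun p : ℝ×ℝ => uθ p.1 p.2 * (iteratedDeriv 2 (q p.1) p.2)^2 *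
      (1+p.2)^(2*𝔩)) ((volume.restrict (Ioc (0:ℝ) x0)).prod (volume.restrict (Ioi (0:ℝ)))) := by
    rw [hprod]; exact hIu'
  have hF1prod : Integrable (fun p : ℝ×ℝ => (deriv (q p.1) p.2)^2 * (1+p.2)^(2*𝔩))
      ((volume.restrict (Ioc (0:ℝ) x0)).prod (volume.restrict (Ioi (0:ℝ)))) := by
    rw [hprod]; exact hI1'
  have hF2prod : Integrable (fun p : ℝ×ℝ => (iteratedDeriv 2 (q p.1) p.2)^2 * (1+p.2)^(2*𝔩))
      ((volume.restrict (Ioc (0:ℝ) x0)).prod (volume.restrict (Ioi (0:ℝ)))) := by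
    rw [hprod]; exact hI2'
  have hF4prod : Integrable (fun p : ℝ×ℝ => (iteratedDeriv 2 (uθ p.1) p.2 * q p.1 p.2)^2 *
      (1+p.2)^(2*𝔩)) ((volume.restrict (Ioc (0:ℝ) x0)).prod (volume.restrict (Ioi (0:ℝ)))) := by
    rw [hprod]; exact hI4'
  have hSprod : Integrable S
      ((volume.restrict (Ioc (0:ℝ) x0)).prod (volume.restrict (Ioi (0:ℝ)))) := by
    rw [hprod]; exact hSint
  have hae : ∀ᵐ x ∂(volume.restrict (Ioc (0:ℝ) x0)),
      (∫ y in Ioi (0:ℝ), iteratedDeriv 3 (fun t => uθ x t * q x t) y * deriv (q x) y * (1+y)^(2*𝔩))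
      = -∫ y in Ioi (0:ℝ), S (x, y) := by
    filter_upwards [hFdprod.prod_right_ae, hFuprod.prod_right_ae, hF1prod.prod_right_ae,
      hF2prod.prod_right_ae, hF4prod.prod_right_ae, ae_restrict_mem measurableSet_Ioc]
      with x h3 hu h1 h2 h4 hx
    obtain ⟨td0, td1, td2⟩ := hdecay x (Ioc_subset_Icc_self hx)
    have hax : ContDiff ℝ (⊤ : ℕ∞) (uθ x) := huθ.comp (contDiff_const.prodMk contDiff_id)
    have hbx : ContDiff ℝ (⊤ : ℕ∞) (q x) := hq.comp (contDiff_const.prodMk contDiff_id)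
    have hs := slice_ibp 𝔩 h𝔩 K hK0 (uθ x) (q x) hax hbx (hpos x) (hbound x) (hq0' x)
      td0 td1 td2 h3 hu h1 h2 h4
    have e2 : (∫ y in Ioi (0:ℝ), S (x, y)) = ∫ y in Ioi (0:ℝ),
        (uθ x y * (iteratedDeriv 2 (q x) y)^2 * (1+y)^(2*𝔩)
        + 2*𝔩 * (uθ x y * iteratedDeriv 2 (q x) y * deriv (q x) y) * (1+y)^(2*𝔩-1)
        - iteratedDeriv 2 (uθ x) y * (deriv (q x) y)^2 * (1+y)^(2*𝔩)
        + 2*𝔩 * (deriv (uθ x) y * (deriv (q x) y)^2) * (1+y)^(2*𝔩-1)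
        + iteratedDeriv 2 (uθ x) y * q x y * iteratedDeriv 2 (q x) y * (1+y)^(2*𝔩)
        + 2*𝔩 * (iteratedDeriv 2 (uθ x) y * q x y * deriv (q x) y) * (1+y)^(2*𝔩-1)) := rfl
    rw [e2]
    linarith [hs]
  have key : (∫ p in D, iteratedDeriv 3 (fun y => uθ p.1 y * q p.1 y) p.2 *
      deriv (q p.1) p.2 * (1+p.2)^(2*𝔩)) = -∫ p in D, S p := by
    calc ∫ p in D, iteratedDeriv 3 (fun y => uθ p.1 y * q p.1 y) p.2 *
          deriv (q p.1) p.2 * (1+p.2)^(2*𝔩)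
        = ∫ p, iteratedDeriv 3 (fun y => uθ p.1 y * q p.1 y) p.2 * deriv (q p.1) p.2 *
            (1+p.2)^(2*𝔩) ∂((volume.restrict (Ioc (0:ℝ) x0)).prod (volume.restrict (Ioi (0:ℝ)))) := by
          rw [hprod]
      _ = ∫ x, (∫ y, iteratedDeriv 3 (fun t => uθ x t * q x t) y * deriv (q x) y * (1+y)^(2*𝔩)
            ∂(volume.restrict (Ioi (0:ℝ)))) ∂(volume.restrict (Ioc (0:ℝ) x0)) :=
          integral_prod _ hFdprod
      _ = ∫ x, (-∫ y, S (x, y) ∂(volume.restrict (Ioi (0:ℝ)))) ∂(volume.restrict (Ioc (0:ℝ) x0)) :=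
          integral_congr_ae hae
      _ = -∫ x, (∫ y, S (x, y) ∂(volume.restrict (Ioi (0:ℝ)))) ∂(volume.restrict (Ioc (0:ℝ) x0)) :=
          integral_neg _
      _ = -∫ p, S p ∂((volume.restrict (Ioc (0:ℝ) x0)).prod (volume.restrict (Ioi (0:ℝ)))) := by
          rw [integral_prod _ hSprod]
      _ = -∫ p in D, S p := by rw [hprod]
  -- nonnegativity
  have hX0 : 0 ≤ ∫ p in D, (deriv (q p.1) p.2)^2 * (1+p.2)^(2*𝔩) :=
    setIntegral_nonneg hDm (fun p hp => by
      have hp2 : (0:ℝ) < p.2 := hp.2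
      exact mul_nonneg (sq_nonneg _) (Real.rpow_nonneg (by linarith) _))
  -- Cauchy–Schwarz auxiliary functions
  set f2c : ℝ×ℝ → ℝ := fun p => Real.sqrt (uθ p.1 p.2) * |iteratedDeriv 2 (q p.1) p.2| *
    Real.sqrt ((1+p.2)^(2*𝔩)) with hf2c
  set g1c : ℝ×ℝ → ℝ := fun p => |deriv (q p.1) p.2| * Real.sqrt ((1+p.2)^(2*𝔩)) with hg1c
  set f4c : ℝ×ℝ → ℝ := fun p => |iteratedDeriv 2 (uθ p.1) p.2 * q p.1 p.2| *
    Real.sqrt ((1+p.2)^(2*𝔩)) with hf4c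
  set g2c : ℝ×ℝ → ℝ := fun p => |iteratedDeriv 2 (q p.1) p.2| * Real.sqrt ((1+p.2)^(2*𝔩)) with hg2c
  have ef2 : EqOn (fun p => (f2c p)^2)
      (fun p : ℝ×ℝ => uθ p.1 p.2 * (iteratedDeriv 2 (q p.1) p.2)^2 * (1+p.2)^(2*𝔩)) D := by
    intro p hp
    have hp2 : (0:ℝ) < p.2 := hp.2
    have hw : (0:ℝ) ≤ (1+p.2)^(2*𝔩) := Real.rpow_nonneg (by linarith) _
    simp only [hf2c, mul_pow, sq_abs, Real.sq_sqrt (hpos p.1 p.2).le, Real.sq_sqrt hw]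
  have eg1 : EqOn (fun p => (g1c p)^2)
      (fun p : ℝ×ℝ => (deriv (q p.1) p.2)^2 * (1+p.2)^(2*𝔩)) D := by
    intro p hp
    have hp2 : (0:ℝ) < p.2 := hp.2
    have hw : (0:ℝ) ≤ (1+p.2)^(2*𝔩) := Real.rpow_nonneg (by linarith) _
    simp only [hg1c, mul_pow, sq_abs, Real.sq_sqrt hw]
  have ef4 : EqOn (fun p => (f4c p)^2)
      (fun p : ℝ×ℝ => (iteratedDeriv 2 (uθ p.1) p.2 * q p.1 p.2)^2 * (1+p.2)^(2*𝔩)) D := by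
    intro p hp
    have hp2 : (0:ℝ) < p.2 := hp.2
    have hw : (0:ℝ) ≤ (1+p.2)^(2*𝔩) := Real.rpow_nonneg (by linarith) _
    simp only [hf4c, mul_pow, sq_abs, Real.sq_sqrt hw]
  have eg2 : EqOn (fun p => (g2c p)^2)
      (fun p : ℝ×ℝ => (iteratedDeriv 2 (q p.1) p.2)^2 * (1+p.2)^(2*𝔩)) D := by
    intro p hp
    have hp2 : (0:ℝ) < p.2 := hp.2
    have hw : (0:ℝ) ≤ (1+p.2)^(2*𝔩) := Real.rpow_nonneg (by linarith) _
    simp only [hg2c, mul_pow, sq_abs, Real.sq_sqrt hw]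
  have if2 : IntegrableOn (fun p => (f2c p)^2) D := hIu'.congr_fun ef2.symm hDm
  have ig1 : IntegrableOn (fun p => (g1c p)^2) D := hI1'.congr_fun eg1.symm hDm
  have if4 : IntegrableOn (fun p => (f4c p)^2) D := hI4'.congr_fun ef4.symm hDm
  have ig2 : IntegrableOn (fun p => (g2c p)^2) D := hI2'.congr_fun eg2.symm hDm
  have eabsQ2 : (fun p : ℝ×ℝ => |iteratedDeriv 2 (q p.1) p.2|) = fun p => |Q2 p| :=
    funext fun p => by rw [eQ2]
  have eabsQ1 : (fun p : ℝ×ℝ => |deriv (q p.1) p.2|) = fun p => |Q1 p| :=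
    funext fun p => by rw [eQ1]
  have eabsU2q : (fun p : ℝ×ℝ => |iteratedDeriv 2 (uθ p.1) p.2 * q p.1 p.2|)
      = fun p => |U2 p * q p.1 p.2| := funext fun p => by rw [eU2]
  have csqW : ContinuousOn (fun p : ℝ×ℝ => Real.sqrt ((1+p.2)^(2*𝔩))) D :=
    Real.continuous_sqrt.comp_continuousOn hcWp
  have cf2 : ContinuousOn f2c D := by
    rw [hf2c]
    apply ContinuousOn.mul ?_ csqW
    apply ContinuousOn.mul ((Real.continuous_sqrt.comp cU).continuousOn) ?_
    rw [eabsQ2]; exact cQ2.abs.continuousOn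
  have cg1 : ContinuousOn g1c D := by
    rw [hg1c]; apply ContinuousOn.mul ?_ csqW
    rw [eabsQ1]; exact cQ1.abs.continuousOn
  have cf4 : ContinuousOn f4c D := by
    rw [hf4c]; apply ContinuousOn.mul ?_ csqW
    rw [eabsU2q]; exact (cU2.mul cQ).abs.continuousOn
  have cg2 : ContinuousOn g2c D := by
    rw [hg2c]; apply ContinuousOn.mul ?_ csqW
    rw [eabsQ2]; exact cQ2.abs.continuousOn
  have prodInt : ∀ (f g : ℝ×ℝ → ℝ), ContinuousOn f D → ContinuousOn g D →
      IntegrableOn (fun p => f p^2) D → IntegrableOn (fun p => g p^2) D →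
      IntegrableOn (fun p => f p * g p) D := by
    intro f g cf cg hf hg
    have hsum : IntegrableOn (fun p => f p^2 + g p^2) D := hf.add hg
    apply Integrable.mono' (hsum.div_const 2) ((cf.mul cg).aestronglyMeasurable hDm)
    apply (ae_restrict_iff' hDm).2 (ae_of_all _ ?_)
    intro p hp
    rw [Real.norm_eq_abs, Pi.mul_apply]
    nlinarith [sq_nonneg (|f p| - |g p|), sq_abs (f p), sq_abs (g p), abs_nonneg (f p),
      abs_nonneg (g p), abs_mul (f p) (g p), abs_nonneg (f p * g p)]
  have ifg2 := prodInt f2c g1c cf2 cg1 if2 ig1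
  have ifg5 := prodInt f4c g2c cf4 cg2 if4 ig2
  have ifg6 := prodInt f4c g1c cf4 cg1 if4 ig1
  have cs2 := cs_int if2 ig1 ifg2
  have cs5 := cs_int if4 ig2 ifg5
  have cs6 := cs_int if4 ig1 ifg6
  have r2 : ∫ p in D, (f2c p)^2
      = ∫ p in D, uθ p.1 p.2 * (iteratedDeriv 2 (q p.1) p.2)^2 * (1+p.2)^(2*𝔩) :=
    setIntegral_congr_fun hDm ef2
  have r1 : ∫ p in D, (g1c p)^2 = ∫ p in D, (deriv (q p.1) p.2)^2 * (1+p.2)^(2*𝔩) :=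
    setIntegral_congr_fun hDm eg1
  have r4 : ∫ p in D, (f4c p)^2
      = ∫ p in D, (iteratedDeriv 2 (uθ p.1) p.2 * q p.1 p.2)^2 * (1+p.2)^(2*𝔩) :=
    setIntegral_congr_fun hDm ef4
  have rg2 : ∫ p in D, (g2c p)^2
      = ∫ p in D, (iteratedDeriv 2 (q p.1) p.2)^2 * (1+p.2)^(2*𝔩) :=
    setIntegral_congr_fun hDm eg2
  rw [r2, r1] at cs2
  rw [r4, rg2] at cs5
  rw [r4, r1] at cs6
  -- lower bounds on the five error integrals
  have low2 : -(2*𝔩*(K+1)) * (∫ p in D, f2c p * g1c p)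
      ≤ ∫ p in D, 2*𝔩*(uθ p.1 p.2 * iteratedDeriv 2 (q p.1) p.2 * deriv (q p.1) p.2) *
        (1+p.2)^(2*𝔩-1) := by
    rw [← integral_const_mul]
    apply setIntegral_mono_on (ifg2.const_mul _) iP2g hDm
    intro p hp
    obtain ⟨w0, v0, vw⟩ := wfacts p hp
    have hb := bnd_P2cs 𝔩 K (uθ p.1 p.2) (deriv (q p.1) p.2) (iteratedDeriv 2 (q p.1) p.2)
      ((1+p.2)^(2*𝔩)) ((1+p.2)^(2*𝔩-1)) h𝔩 hK0 (hpos p.1 p.2)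
      ((abs_le.1 (hbound p.1 p.2).1).2) w0 v0 vw
    have hn := neg_abs_le (2*𝔩*(uθ p.1 p.2 * iteratedDeriv 2 (q p.1) p.2 * deriv (q p.1) p.2) *
      (1+p.2)^(2*𝔩-1))
    simp only [hf2c, hg1c]
    linarith
  have low5 : -(1:ℝ) * (∫ p in D, f4c p * g2c p)
      ≤ ∫ p in D, iteratedDeriv 2 (uθ p.1) p.2 * q p.1 p.2 * iteratedDeriv 2 (q p.1) p.2 *
        (1+p.2)^(2*𝔩) := by
    rw [← integral_const_mul]
    apply setIntegral_mono_on (ifg5.const_mul _) iP5g hDm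
    intro p hp
    obtain ⟨w0, v0, vw⟩ := wfacts p hp
    have hb := bnd_P5cs (iteratedDeriv 2 (uθ p.1) p.2) (q p.1 p.2) (iteratedDeriv 2 (q p.1) p.2)
      ((1+p.2)^(2*𝔩)) w0
    have hn := neg_abs_le (iteratedDeriv 2 (uθ p.1) p.2 * q p.1 p.2 *
      iteratedDeriv 2 (q p.1) p.2 * (1+p.2)^(2*𝔩))
    simp only [hf4c, hg2c]
    linarith
  have low6 : -(2*𝔩) * (∫ p in D, f4c p * g1c p)
      ≤ ∫ p in D, 2*𝔩*(iteratedDeriv 2 (uθ p.1) p.2 * q p.1 p.2 * deriv (q p.1) p.2) *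
        (1+p.2)^(2*𝔩-1) := by
    rw [← integral_const_mul]
    apply setIntegral_mono_on (ifg6.const_mul _) iP6g hDm
    intro p hp
    obtain ⟨w0, v0, vw⟩ := wfacts p hp
    have hb := bnd_P6cs 𝔩 (iteratedDeriv 2 (uθ p.1) p.2) (q p.1 p.2) (deriv (q p.1) p.2)
      ((1+p.2)^(2*𝔩)) ((1+p.2)^(2*𝔩-1)) h𝔩 w0 v0 vw
    have hn := neg_abs_le (2*𝔩*(iteratedDeriv 2 (uθ p.1) p.2 * q p.1 p.2 * deriv (q p.1) p.2) *
      (1+p.2)^(2*𝔩-1))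
    simp only [hf4c, hg1c]
    linarith
  have lowJ3 : (∫ p in D, iteratedDeriv 2 (uθ p.1) p.2 * (deriv (q p.1) p.2)^2 * (1+p.2)^(2*𝔩))
      ≤ K * ∫ p in D, (deriv (q p.1) p.2)^2 * (1+p.2)^(2*𝔩) := by
    rw [← integral_const_mul]
    apply setIntegral_mono_on iJ3g (hI1'.const_mul K) hDm
    intro p hp
    obtain ⟨w0, v0, vw⟩ := wfacts p hp
    have e : |iteratedDeriv 2 (uθ p.1) p.2 * (deriv (q p.1) p.2)^2 * (1+p.2)^(2*𝔩)|
        = |iteratedDeriv 2 (uθ p.1) p.2| * (deriv (q p.1) p.2)^2 * (1+p.2)^(2*𝔩) := by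
      simp only [abs_mul, abs_of_nonneg w0, abs_pow, sq_abs]
    have h2 := (hbound p.1 p.2).2.2
    nlinarith [le_abs_self (iteratedDeriv 2 (uθ p.1) p.2 * (deriv (q p.1) p.2)^2 * (1+p.2)^(2*𝔩)),
      mul_nonneg (sub_nonneg.2 h2) (mul_nonneg (sq_nonneg (deriv (q p.1) p.2)) w0), e]
  have lowJ4 : -(2*𝔩*K) * (∫ p in D, (deriv (q p.1) p.2)^2 * (1+p.2)^(2*𝔩))
      ≤ ∫ p in D, 2*𝔩*(deriv (uθ p.1) p.2 * (deriv (q p.1) p.2)^2) * (1+p.2)^(2*𝔩-1) := by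
    rw [← integral_const_mul]
    apply setIntegral_mono_on (hI1'.const_mul _) iJ4g hDm
    intro p hp
    obtain ⟨w0, v0, vw⟩ := wfacts p hp
    have h2 := (hbound p.1 p.2).2.1
    have e : |2*𝔩*(deriv (uθ p.1) p.2 * (deriv (q p.1) p.2)^2) * (1+p.2)^(2*𝔩-1)|
        = 2*𝔩*(|deriv (uθ p.1) p.2| * (deriv (q p.1) p.2)^2) * (1+p.2)^(2*𝔩-1) := by
      simp only [abs_mul, abs_two, abs_of_nonneg h𝔩0, abs_of_nonneg v0, abs_pow, sq_abs]
    have hn := neg_abs_le (2*𝔩*(deriv (uθ p.1) p.2 * (deriv (q p.1) p.2)^2) * (1+p.2)^(2*𝔩-1))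
    nlinarith [mul_nonneg (mul_nonneg (mul_nonneg h𝔩0 (sub_nonneg.2 h2))
        (sq_nonneg (deriv (q p.1) p.2))) w0,
      mul_nonneg (mul_nonneg (mul_nonneg h𝔩0 (abs_nonneg (deriv (uθ p.1) p.2)))
        (sq_nonneg (deriv (q p.1) p.2))) (sub_nonneg.2 vw), e, hn]
  -- final assembly
  rw [key, neg_neg, hSplit]
  have hY := Real.sqrt_nonneg (∫ p in D, (deriv (q p.1) p.2)^2 * (1+p.2)^(2*𝔩))
  have hZ := Real.sqrt_nonneg (∫ p in D, uθ p.1 p.2 * (iteratedDeriv 2 (q p.1) p.2)^2 *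
    (1+p.2)^(2*𝔩))
  have hR := Real.sqrt_nonneg (∫ p in D, (iteratedDeriv 2 (uθ p.1) p.2 * q p.1 p.2)^2 *
    (1+p.2)^(2*𝔩))
  have hT := Real.sqrt_nonneg (∫ p in D, (iteratedDeriv 2 (q p.1) p.2)^2 * (1+p.2)^(2*𝔩))
  nlinarith [cs2, cs5, cs6, low2, low5, low6, lowJ3, lowJ4, hX0, hY, hZ, hR, hT,
    mul_nonneg (by positivity : (0:ℝ) ≤ 2*𝔩*(K+1)) (sub_nonneg.2 cs2),
    mul_nonneg (by positivity : (0:ℝ) ≤ 2*𝔩) (sub_nonneg.2 cs6),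
    mul_nonneg hY hZ, mul_nonneg hR hT, mul_nonneg hR hY,
    mul_nonneg (mul_nonneg h𝔩0 hK0) (mul_nonneg hY hZ),
    mul_nonneg h𝔩0 (mul_nonneg hY hZ),
    mul_nonneg (mul_nonneg h𝔩0 hK0) hX0, mul_nonneg h𝔩0 hX0,
    mul_nonneg (sub_nonneg.2 h𝔩) (mul_nonneg hK0 hX0),
    mul_nonneg (mul_nonneg h𝔩0 hK0) (mul_nonneg hR hT),
    mul_nonneg (sub_nonneg.2 h𝔩) (mul_nonneg hR hT),
    mul_nonneg (mul_nonneg h𝔩0 hK0) (mul_nonneg hR hY),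
    mul_nonneg h𝔩0 (mul_nonneg hR hY)]
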